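/- arXiv:1108.6252 — 5 statements merged into one kernel-verified Lean document; each statement's English description precedes it below -/
import Mathlib

section
/- Let $\mathcal{R}$ be an algebraic Kähler curvature tensor on $\mathbb{C}^n$ with $n \geq 2$, satisfying the NQOBC condition: for every unitary frame $\{e_1,\dots,e_n\}$ and all real $\xi_1,\dots,\xi_n$, $\sum_{i,j} \mathcal{R}(e_i,\bar e_i,e_j,\bar e_j)(\xi_i-\xi_j)^2 \geq 0$. Suppose the tensor splits as a direct sum $\mathbb{C}^n = \mathbb{C} \oplus \mathbb{C}^{n-1}$ (i.e., $\mathcal{R}(X,\bar Y,Z,\bar W)$ vanishes unless all arguments lie in the same factor, with the exceptions respecting product structure). Then for any unitary frame with $e_1$ in the first factor and $e_2,\dots,e_n$ in the second, $\sum_{j=2}^n \mathcal{R}(e_2,\bar e_2, e_j, \bar e_j) \geq -\mathcal{R}(e_1,\bar e_1,e_1,\bar e_1)$. -/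
open Finset

noncomputable section

/-- An algebraic Kähler curvature tensor on `ℂⁿ`: complex linear in the first and
third (unbarred) slots, conjugate linear in the second and fourth (barred) slots,
with the pair symmetry `R(X,Ȳ,Z,W̄) = R(Z,W̄,X,Ȳ)`, the Kähler symmetry
`R(X,Ȳ,Z,W̄) = R(Z,Ȳ,X,W̄)`, and the reality condition
`conj R(X,Ȳ,Z,W̄) = R(Y,X̄,W,Z̄)`. -/
structure AKCT (n : ℕ) where
  R : (Fin n → ℂ) → (Fin n → ℂ) → (Fin n → ℂ) → (Fin n → ℂ) → ℂ
  smul_fst : ∀ (a : ℂ) (X Y Z W), R (a • X) Y Z W = a * R X Y Z W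
  add_fst : ∀ (X X' Y Z W), R (X + X') Y Z W = R X Y Z W + R X' Y Z W
  smul_snd : ∀ (a : ℂ) (X Y Z W), R X (a • Y) Z W = (starRingEnd ℂ) a * R X Y Z W
  add_snd : ∀ (X Y Y' Z W), R X (Y + Y') Z W = R X Y Z W + R X Y' Z W
  pair_symm : ∀ (X Y Z W), R X Y Z W = R Z W X Y
  kahler_symm : ∀ (X Y Z W), R X Y Z W = R Z Y X W
  conj_symm : ∀ (X Y Z W), (starRingEnd ℂ) (R X Y Z W) = R Y X W Z

/-- The standard Hermitian inner product on `ℂⁿ` (conjugate linear in the first slot). -/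
def hermInner {n : ℕ} (v w : Fin n → ℂ) : ℂ := ∑ k, (starRingEnd ℂ) (v k) * w k

/-- A unitary frame of `ℂⁿ`. -/
def UnitaryFrame {n : ℕ} (e : Fin n → Fin n → ℂ) : Prop :=
  ∀ i j, hermInner (e i) (e j) = if i = j then 1 else 0

/-- An orthonormal (unitary) pair of vectors in `ℂⁿ`. -/
def OrthPair {n : ℕ} (V W : Fin n → ℂ) : Prop :=
  hermInner V V = 1 ∧ hermInner W W = 1 ∧ hermInner V W = 0

/-- Nonnegative quadratic orthogonal bisectional curvature. -/
def NQOBC {n : ℕ} (𝓡 : AKCT n) : Prop :=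
  ∀ e : Fin n → Fin n → ℂ, UnitaryFrame e →
    ∀ ξ : Fin n → ℝ,
      0 ≤ ∑ i, ∑ j, (𝓡.R (e i) (e i) (e j) (e j)).re * (ξ i - ξ j) ^ 2

/-- The `k`-th standard basis vector of `ℂⁿ`. -/
def stdVec {n : ℕ} (k : Fin n) : Fin n → ℂ := fun m => if m = k then 1 else 0

/-- The scalar curvature of an algebraic Kähler curvature tensor
(computed in the standard basis). -/
def scalarCurv {n : ℕ} (𝓡 : AKCT n) : ℝ :=
  ∑ i, ∑ j, (𝓡.R (stdVec i) (stdVec i) (stdVec j) (stdVec j)).re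

end

noncomputable section

/-- `v` lies in the first factor `ℂ` (spanned by the coordinate `i₀`). -/
def InFirstFactor {n : ℕ} (i₀ : Fin n) (v : Fin n → ℂ) : Prop :=
  ∀ k, k ≠ i₀ → v k = 0

/-- `v` lies in the second factor `ℂ^{n-1}` (the coordinates other than `i₀`). -/
def InSecondFactor {n : ℕ} (i₀ : Fin n) (v : Fin n → ℂ) : Prop :=
  v i₀ = 0


namespace AKCTaux
variable {n : ℕ} (𝓣 : AKCT n)

lemma smul3 (a : ℂ) (X Y Z W) : 𝓣.R X Y (a • Z) W = a * 𝓣.R X Y Z W := by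
  rw [𝓣.pair_symm X Y (a • Z) W, 𝓣.smul_fst, 𝓣.pair_symm Z W X Y]

lemma add3 (X Y Z Z' W) : 𝓣.R X Y (Z + Z') W = 𝓣.R X Y Z W + 𝓣.R X Y Z' W := by
  rw [𝓣.pair_symm X Y (Z + Z') W, 𝓣.add_fst, 𝓣.pair_symm Z W X Y, 𝓣.pair_symm Z' W X Y]

lemma smul4 (a : ℂ) (X Y Z W) : 𝓣.R X Y Z (a • W) = (starRingEnd ℂ) a * 𝓣.R X Y Z W := by
  rw [𝓣.pair_symm X Y Z (a • W), 𝓣.smul_snd, 𝓣.pair_symm Z W X Y]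

lemma add4 (X Y Z W W') : 𝓣.R X Y Z (W + W') = 𝓣.R X Y Z W + 𝓣.R X Y Z W' := by
  rw [𝓣.pair_symm X Y Z (W + W'), 𝓣.add_snd, 𝓣.pair_symm Z W X Y, 𝓣.pair_symm Z W' X Y]

lemma sub1 (X X' Y Z W) : 𝓣.R (X - X') Y Z W = 𝓣.R X Y Z W - 𝓣.R X' Y Z W := by
  rw [sub_eq_add_neg, ← neg_one_smul ℂ X', 𝓣.add_fst, 𝓣.smul_fst]; ring

lemma sub2 (X Y Y' Z W) : 𝓣.R X (Y - Y') Z W = 𝓣.R X Y Z W - 𝓣.R X Y' Z W := by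
  rw [sub_eq_add_neg, ← neg_one_smul ℂ Y', 𝓣.add_snd, 𝓣.smul_snd]; simp; ring

lemma sub3 (X Y Z Z' W) : 𝓣.R X Y (Z - Z') W = 𝓣.R X Y Z W - 𝓣.R X Y Z' W := by
  rw [sub_eq_add_neg, ← neg_one_smul ℂ Z', add3, smul3]; ring

lemma sub4 (X Y Z W W') : 𝓣.R X Y Z (W - W') = 𝓣.R X Y Z W - 𝓣.R X Y Z W' := by
  rw [sub_eq_add_neg, ← neg_one_smul ℂ W', add4, smul4]; simp; ring

end AKCTaux

namespace hermAux
variable {n : ℕ}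

lemma add_left (v v' w : Fin n → ℂ) : hermInner (v + v') w = hermInner v w + hermInner v' w := by
  simp [hermInner, add_mul, Finset.sum_add_distrib]

lemma add_right (v w w' : Fin n → ℂ) : hermInner v (w + w') = hermInner v w + hermInner v w' := by
  simp [hermInner, mul_add, Finset.sum_add_distrib]

lemma sub_left (v v' w : Fin n → ℂ) : hermInner (v - v') w = hermInner v w - hermInner v' w := by
  simp [hermInner, sub_mul, Finset.sum_sub_distrib]

lemma sub_right (v w w' : Fin n → ℂ) : hermInner v (w - w') = hermInner v w - hermInner v w' := by
  simp [hermInner, mul_sub, Finset.sum_sub_distrib]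

lemma smul_left (a : ℂ) (v w : Fin n → ℂ) : hermInner (a • v) w = (starRingEnd ℂ) a * hermInner v w := by
  simp [hermInner, Finset.mul_sum, mul_assoc]

lemma smul_right (a : ℂ) (v w : Fin n → ℂ) : hermInner v (a • w) = a * hermInner v w := by
  simp [hermInner, Finset.mul_sum]; apply Finset.sum_congr rfl; intros; ring

end hermAux

/-- Lemma 4.3: if an algebraic Kähler curvature tensor on
`ℂⁿ = ℂ ⊕ ℂ^{n-1}` is a product tensor (all components mixing the two factors
vanish) and satisfies NQOBC, then for every unitary frame adapted to the
splitting, `∑_{j ≥ 2} R(e₂,ē₂,e_j,ē_j) ≥ -R(e₁,ē₁,e₁,ē₁)`. -/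
theorem stmt3 (n : ℕ) (hn : 2 ≤ n) (𝓡 : AKCT n) (i₀ : Fin n)
    (hsplit : ∀ X Y Z W : Fin n → ℂ,
      (InFirstFactor i₀ X ∨ InSecondFactor i₀ X) →
      (InFirstFactor i₀ Y ∨ InSecondFactor i₀ Y) →
      (InFirstFactor i₀ Z ∨ InSecondFactor i₀ Z) →
      (InFirstFactor i₀ W ∨ InSecondFactor i₀ W) →
      ¬ ((InFirstFactor i₀ X ∧ InFirstFactor i₀ Y ∧ InFirstFactor i₀ Z ∧ InFirstFactor i₀ W) ∨
         (InSecondFactor i₀ X ∧ InSecondFactor i₀ Y ∧ InSecondFactor i₀ Z ∧ InSecondFactor i₀ W)) →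
      𝓡.R X Y Z W = 0)
    (hNQOBC : NQOBC 𝓡)
    (e : Fin n → Fin n → ℂ) (he : UnitaryFrame e)
    (i₁ : Fin n) (hne : i₁ ≠ i₀)
    (h₁ : InFirstFactor i₀ (e i₀))
    (h₂ : ∀ j, j ≠ i₀ → InSecondFactor i₀ (e j)) :
    -(𝓡.R (e i₀) (e i₀) (e i₀) (e i₀)).re ≤
      ∑ j ∈ Finset.univ.erase i₀, (𝓡.R (e i₁) (e i₁) (e j) (e j)).re := by
  classical
  have hne' : i₀ ≠ i₁ := Ne.symm hne
  -- normalizing constant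
  set c : ℝ := (Real.sqrt 2)⁻¹ with hc
  have hcc : (c : ℂ) * (c : ℂ) = 1/2 := by
    have h2 : (c * c : ℝ) = 1/2 := by
      rw [hc, ← mul_inv, Real.mul_self_sqrt (by norm_num : (0:ℝ) ≤ 2)]
      norm_num
    calc (c:ℂ) * (c:ℂ) = ((c * c : ℝ) : ℂ) := by push_cast; ring
    _ = 1/2 := by rw [h2]; norm_num
  -- the rotated frame
  set f : Fin n → Fin n → ℂ := fun i =>
    if i = i₀ then (c:ℂ) • (e i₀ + e i₁) else if i = i₁ then (c:ℂ) • (e i₀ - e i₁) else e i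
    with hfdef
  have hf0 : f i₀ = (c:ℂ) • (e i₀ + e i₁) := by rw [hfdef]; simp
  have hf1 : f i₁ = (c:ℂ) • (e i₀ - e i₁) := by rw [hfdef]; simp [hne]
  have hfr : ∀ j, j ≠ i₀ → j ≠ i₁ → f j = e j := by
    intro j h0 h1; rw [hfdef]; simp [h0, h1]
  -- f is a unitary frame
  have he00 : hermInner (e i₀) (e i₀) = 1 := by rw [he]; simp
  have he01 : hermInner (e i₀) (e i₁) = 0 := by rw [he]; simp [hne']
  have he10 : hermInner (e i₁) (e i₀) = 0 := by rw [he]; simp [hne]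
  have he11 : hermInner (e i₁) (e i₁) = 1 := by rw [he]; simp
  have hFrame : UnitaryFrame f := by
    intro i j
    by_cases hi0 : i = i₀
    · by_cases hj0 : j = i₀
      · rw [hi0, hj0, hf0, if_pos rfl]
        simp only [hermAux.smul_left, hermAux.smul_right, hermAux.add_left,
          hermAux.add_right, Complex.conj_ofReal, he00, he01, he10, he11]
        linear_combination 2 * hcc
      · by_cases hj1 : j = i₁
        · rw [hi0, hj1, hf0, hf1, if_neg hne']
          simp only [hermAux.smul_left, hermAux.smul_right, hermAux.add_left,
            hermAux.sub_right, Complex.conj_ofReal, he00, he01, he10, he11]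
          ring
        · have he0j : hermInner (e i₀) (e j) = 0 := by rw [he]; simp [Ne.symm hj0]
          have he1j : hermInner (e i₁) (e j) = 0 := by rw [he]; simp [Ne.symm hj1]
          rw [hi0, hf0, hfr j hj0 hj1, if_neg (Ne.symm hj0)]
          simp only [hermAux.smul_left, hermAux.add_left, Complex.conj_ofReal, he0j, he1j]
          ring
    · by_cases hi1 : i = i₁
      · by_cases hj0 : j = i₀
        · rw [hi1, hj0, hf1, hf0, if_neg hne]
          simp only [hermAux.smul_left, hermAux.smul_right, hermAux.sub_left,
            hermAux.add_right, Complex.conj_ofReal, he00, he01, he10, he11]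
          ring
        · by_cases hj1 : j = i₁
          · rw [hi1, hj1, hf1, if_pos rfl]
            simp only [hermAux.smul_left, hermAux.smul_right, hermAux.sub_left,
              hermAux.sub_right, Complex.conj_ofReal, he00, he01, he10, he11]
            linear_combination 2 * hcc
          · have he0j : hermInner (e i₀) (e j) = 0 := by rw [he]; simp [Ne.symm hj0]
            have he1j : hermInner (e i₁) (e j) = 0 := by rw [he]; simp [Ne.symm hj1]
            rw [hi1, hf1, hfr j hj0 hj1, if_neg (Ne.symm hj1)]
            simp only [hermAux.smul_left, hermAux.sub_left, Complex.conj_ofReal, he0j, he1j]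
            ring
      · by_cases hj0 : j = i₀
        · have hei0 : hermInner (e i) (e i₀) = 0 := by rw [he]; simp [hi0]
          have hei1 : hermInner (e i) (e i₁) = 0 := by rw [he]; simp [hi1]
          rw [hj0, hfr i hi0 hi1, hf0, if_neg hi0]
          simp only [hermAux.smul_right, hermAux.add_right, hei0, hei1]
          ring
        · by_cases hj1 : j = i₁
          · have hei0 : hermInner (e i) (e i₀) = 0 := by rw [he]; simp [hi0]
            have hei1 : hermInner (e i) (e i₁) = 0 := by rw [he]; simp [hi1]
            rw [hj1, hfr i hi0 hi1, hf1, if_neg hi1]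
            simp only [hermAux.smul_right, hermAux.sub_right, hei0, hei1]
            ring
          · rw [hfr i hi0 hi1, hfr j hj0 hj1]; exact he i j
  -- basic nonvanishing facts
  have hnz : ∀ k, e k ≠ 0 := by
    intro k hk
    have h := he k k
    rw [hk] at h
    simp [hermInner] at h
  have hnotsec : ¬ InSecondFactor i₀ (e i₀) := by
    intro h
    apply hnz i₀
    funext k
    by_cases hk : k = i₀
    · rw [hk]; exact h
    · exact h₁ k hk
  have hnotfst : ∀ k, k ≠ i₀ → ¬ InFirstFactor i₀ (e k) := by
    intro k hk h
    apply hnz k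
    funext m
    by_cases hm : m = i₀
    · rw [hm]; exact h₂ k hk
    · exact h m hm
  -- vanishing of mixed curvature components
  have hmix : ∀ p q r s : Fin n, ¬(p = i₀ ∧ q = i₀ ∧ r = i₀ ∧ s = i₀) →
      (p = i₀ ∨ q = i₀ ∨ r = i₀ ∨ s = i₀) → 𝓡.R (e p) (e q) (e r) (e s) = 0 := by
    intro p q r s hall hsome
    have mem : ∀ t : Fin n, InFirstFactor i₀ (e t) ∨ InSecondFactor i₀ (e t) := by
      intro t
      by_cases ht : t = i₀
      · left; rw [ht]; exact h₁
      · right; exact h₂ t ht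
    apply hsplit _ _ _ _ (mem p) (mem q) (mem r) (mem s)
    rintro (⟨hp, hq, hr, hs⟩ | ⟨hp, hq, hr, hs⟩)
    · refine hall ⟨?_, ?_, ?_, ?_⟩
      · by_contra h; exact hnotfst p h hp
      · by_contra h; exact hnotfst q h hq
      · by_contra h; exact hnotfst r h hr
      · by_contra h; exact hnotfst s h hs
    · rcases hsome with h | h | h | h
      · exact hnotsec (h ▸ hp)
      · exact hnotsec (h ▸ hq)
      · exact hnotsec (h ▸ hr)
      · exact hnotsec (h ▸ hs)
  have z0001 : 𝓡.R (e i₀) (e i₀) (e i₀) (e i₁) = 0 := hmix _ _ _ _ (by simp [hne]) (by simp)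
  have z0010 : 𝓡.R (e i₀) (e i₀) (e i₁) (e i₀) = 0 := hmix _ _ _ _ (by simp [hne]) (by simp)
  have z0011 : 𝓡.R (e i₀) (e i₀) (e i₁) (e i₁) = 0 := hmix _ _ _ _ (by simp [hne]) (by simp)
  have z0100 : 𝓡.R (e i₀) (e i₁) (e i₀) (e i₀) = 0 := hmix _ _ _ _ (by simp [hne]) (by simp)
  have z0101 : 𝓡.R (e i₀) (e i₁) (e i₀) (e i₁) = 0 := hmix _ _ _ _ (by simp [hne]) (by simp)
  have z0110 : 𝓡.R (e i₀) (e i₁) (e i₁) (e i₀) = 0 := hmix _ _ _ _ (by simp [hne]) (by simp)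
  have z0111 : 𝓡.R (e i₀) (e i₁) (e i₁) (e i₁) = 0 := hmix _ _ _ _ (by simp [hne]) (by simp)
  have z1000 : 𝓡.R (e i₁) (e i₀) (e i₀) (e i₀) = 0 := hmix _ _ _ _ (by simp [hne]) (by simp)
  have z1001 : 𝓡.R (e i₁) (e i₀) (e i₀) (e i₁) = 0 := hmix _ _ _ _ (by simp [hne]) (by simp)
  have z1010 : 𝓡.R (e i₁) (e i₀) (e i₁) (e i₀) = 0 := hmix _ _ _ _ (by simp [hne]) (by simp)
  have z1011 : 𝓡.R (e i₁) (e i₀) (e i₁) (e i₁) = 0 := hmix _ _ _ _ (by simp [hne]) (by simp)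
  have z1100 : 𝓡.R (e i₁) (e i₁) (e i₀) (e i₀) = 0 := hmix _ _ _ _ (by simp [hne]) (by simp)
  have z1101 : 𝓡.R (e i₁) (e i₁) (e i₀) (e i₁) = 0 := hmix _ _ _ _ (by simp [hne]) (by simp)
  have z1110 : 𝓡.R (e i₁) (e i₁) (e i₁) (e i₀) = 0 := hmix _ _ _ _ (by simp [hne]) (by simp)
  -- curvature values in the rotated frame
  have hS01 : ((4:ℝ):ℂ) * 𝓡.R (f i₀) (f i₀) (f i₁) (f i₁) =
      𝓡.R (e i₀) (e i₀) (e i₀) (e i₀) + 𝓡.R (e i₁) (e i₁) (e i₁) (e i₁) := by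
    rw [hf0, hf1]
    simp only [𝓡.smul_fst, 𝓡.smul_snd, AKCTaux.smul3, AKCTaux.smul4, 𝓡.add_fst, 𝓡.add_snd,
      AKCTaux.add3, AKCTaux.add4, AKCTaux.sub3, AKCTaux.sub4, Complex.conj_ofReal,
      z0001, z0010, z0011, z0100, z0101, z0110, z0111, z1000, z1001, z1010, z1011,
      z1100, z1101, z1110, mul_zero, zero_mul, add_zero, zero_add, sub_zero, zero_sub]
    push_cast
    linear_combination (4*((c:ℂ)*(c:ℂ)) + 2) *
      (𝓡.R (e i₀) (e i₀) (e i₀) (e i₀) + 𝓡.R (e i₁) (e i₁) (e i₁) (e i₁)) * hcc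
  have hS0j : ∀ j, j ≠ i₀ → ((2:ℝ):ℂ) * 𝓡.R (f i₀) (f i₀) (e j) (e j) =
      𝓡.R (e i₁) (e i₁) (e j) (e j) := by
    intro j hj
    have w1 : 𝓡.R (e i₀) (e i₀) (e j) (e j) = 0 := hmix _ _ _ _ (by simp [hj]) (by simp)
    have w2 : 𝓡.R (e i₀) (e i₁) (e j) (e j) = 0 := hmix _ _ _ _ (by simp [hne]) (by simp)
    have w3 : 𝓡.R (e i₁) (e i₀) (e j) (e j) = 0 := hmix _ _ _ _ (by simp [hne]) (by simp)
    rw [hf0]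
    simp only [𝓡.smul_fst, 𝓡.smul_snd, 𝓡.add_fst, 𝓡.add_snd, Complex.conj_ofReal,
      w1, w2, w3, mul_zero, zero_mul, add_zero, zero_add]
    push_cast
    linear_combination (2:ℂ) * 𝓡.R (e i₁) (e i₁) (e j) (e j) * hcc
  have hS1j : ∀ j, j ≠ i₀ → ((2:ℝ):ℂ) * 𝓡.R (f i₁) (f i₁) (e j) (e j) =
      𝓡.R (e i₁) (e i₁) (e j) (e j) := by
    intro j hj
    have w1 : 𝓡.R (e i₀) (e i₀) (e j) (e j) = 0 := hmix _ _ _ _ (by simp [hj]) (by simp)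
    have w2 : 𝓡.R (e i₀) (e i₁) (e j) (e j) = 0 := hmix _ _ _ _ (by simp [hne]) (by simp)
    have w3 : 𝓡.R (e i₁) (e i₀) (e j) (e j) = 0 := hmix _ _ _ _ (by simp [hne]) (by simp)
    rw [hf1]
    simp only [𝓡.smul_fst, 𝓡.smul_snd, AKCTaux.sub1, AKCTaux.sub2, Complex.conj_ofReal,
      w1, w2, w3, mul_zero, zero_mul, add_zero, zero_add, sub_zero, zero_sub]
    push_cast
    linear_combination (2:ℂ) * 𝓡.R (e i₁) (e i₁) (e j) (e j) * hcc
  -- real parts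
  have reOf : ∀ (m : ℝ) (z w : ℂ), ((m:ℝ):ℂ) * z = w → m * z.re = w.re := by
    intro m z w h
    have h' := congrArg Complex.re h
    simpa using h'
  have hS01re : 4 * (𝓡.R (f i₀) (f i₀) (f i₁) (f i₁)).re =
      (𝓡.R (e i₀) (e i₀) (e i₀) (e i₀)).re + (𝓡.R (e i₁) (e i₁) (e i₁) (e i₁)).re := by
    have := reOf 4 _ _ hS01
    simpa [Complex.add_re] using this
  have hS0jre : ∀ j, j ≠ i₀ → 2 * (𝓡.R (f i₀) (f i₀) (e j) (e j)).re =
      (𝓡.R (e i₁) (e i₁) (e j) (e j)).re := fun j hj => reOf 2 _ _ (hS0j j hj)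
  have hS1jre : ∀ j, j ≠ i₀ → 2 * (𝓡.R (f i₁) (f i₁) (e j) (e j)).re =
      (𝓡.R (e i₁) (e i₁) (e j) (e j)).re := fun j hj => reOf 2 _ _ (hS1j j hj)
  -- the weights
  set ξ : Fin n → ℝ := fun i => if i = i₀ then 1 else if i = i₁ then -1 else 0 with hξdef
  have hξ0 : ξ i₀ = 1 := by rw [hξdef]; simp
  have hξ1 : ξ i₁ = -1 := by rw [hξdef]; simp [hne]
  have hξj : ∀ j, j ≠ i₀ → j ≠ i₁ → ξ j = 0 := by
    intro j h0 h1; rw [hξdef]; simp [h0, h1]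
  -- index bookkeeping
  set rest : Finset (Fin n) := (Finset.univ.erase i₀).erase i₁ with hrest
  have hmemi₁ : i₁ ∈ Finset.univ.erase i₀ := Finset.mem_erase.2 ⟨hne, Finset.mem_univ _⟩
  have hins1 : insert i₁ rest = Finset.univ.erase i₀ := Finset.insert_erase hmemi₁
  have hu : (Finset.univ : Finset (Fin n)) = insert i₀ (insert i₁ rest) := by
    rw [hins1, Finset.insert_erase (Finset.mem_univ i₀)]
  have h0notin : i₀ ∉ insert i₁ rest := by
    rw [hins1]; simp
  have h1notin : i₁ ∉ rest := by rw [hrest]; simp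
  have sum_split : ∀ g : Fin n → ℝ, ∑ j, g j = g i₀ + g i₁ + ∑ j ∈ rest, g j := by
    intro g
    rw [show (Finset.univ : Finset (Fin n)) = insert i₀ (insert i₁ rest) from hu,
      Finset.sum_insert h0notin, Finset.sum_insert h1notin]
    ring
  have hrestmem : ∀ j ∈ rest, j ≠ i₀ ∧ j ≠ i₁ := by
    intro j hj
    rw [hrest] at hj
    simp only [Finset.mem_erase, Finset.mem_univ, and_true] at hj
    exact ⟨hj.2, hj.1⟩
  -- evaluate the NQOBC sum
  have hineq := hNQOBC f hFrame ξ
  have hrow0 : ∑ j, (𝓡.R (f i₀) (f i₀) (f j) (f j)).re * (ξ i₀ - ξ j)^2 =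
      ((𝓡.R (e i₀) (e i₀) (e i₀) (e i₀)).re + (𝓡.R (e i₁) (e i₁) (e i₁) (e i₁)).re)
      + (∑ j ∈ rest, (𝓡.R (e i₁) (e i₁) (e j) (e j)).re) / 2 := by
    rw [sum_split]
    have t1 : (𝓡.R (f i₀) (f i₀) (f i₀) (f i₀)).re * (ξ i₀ - ξ i₀)^2 = 0 := by ring
    have t2 : (𝓡.R (f i₀) (f i₀) (f i₁) (f i₁)).re * (ξ i₀ - ξ i₁)^2 =
        (𝓡.R (e i₀) (e i₀) (e i₀) (e i₀)).re + (𝓡.R (e i₁) (e i₁) (e i₁) (e i₁)).re := by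
      rw [hξ0, hξ1]; norm_num; linarith [hS01re]
    have t3 : ∑ j ∈ rest, (𝓡.R (f i₀) (f i₀) (f j) (f j)).re * (ξ i₀ - ξ j)^2 =
        ∑ j ∈ rest, (𝓡.R (e i₁) (e i₁) (e j) (e j)).re / 2 := by
      apply Finset.sum_congr rfl
      intro j hj
      obtain ⟨hj0, hj1⟩ := hrestmem j hj
      rw [hfr j hj0 hj1, hξ0, hξj j hj0 hj1]
      have := hS0jre j hj0
      norm_num
      linarith
    rw [t1, t2, t3, ← Finset.sum_div]
    ring
  have hrow1 : ∑ j, (𝓡.R (f i₁) (f i₁) (f j) (f j)).re * (ξ i₁ - ξ j)^2 =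
      ((𝓡.R (e i₀) (e i₀) (e i₀) (e i₀)).re + (𝓡.R (e i₁) (e i₁) (e i₁) (e i₁)).re)
      + (∑ j ∈ rest, (𝓡.R (e i₁) (e i₁) (e j) (e j)).re) / 2 := by
    rw [sum_split]
    have t1 : (𝓡.R (f i₁) (f i₁) (f i₁) (f i₁)).re * (ξ i₁ - ξ i₁)^2 = 0 := by ring
    have t2 : (𝓡.R (f i₁) (f i₁) (f i₀) (f i₀)).re * (ξ i₁ - ξ i₀)^2 =
        (𝓡.R (e i₀) (e i₀) (e i₀) (e i₀)).re + (𝓡.R (e i₁) (e i₁) (e i₁) (e i₁)).re := by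
      rw [𝓡.pair_symm (f i₁) (f i₁) (f i₀) (f i₀), hξ0, hξ1]; norm_num; linarith [hS01re]
    have t3 : ∑ j ∈ rest, (𝓡.R (f i₁) (f i₁) (f j) (f j)).re * (ξ i₁ - ξ j)^2 =
        ∑ j ∈ rest, (𝓡.R (e i₁) (e i₁) (e j) (e j)).re / 2 := by
      apply Finset.sum_congr rfl
      intro j hj
      obtain ⟨hj0, hj1⟩ := hrestmem j hj
      rw [hfr j hj0 hj1, hξ1, hξj j hj0 hj1]
      have := hS1jre j hj0
      norm_num
      linarith
    rw [t1, t2, t3, ← Finset.sum_div]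
    ring
  have hrowr : ∀ i ∈ rest, ∑ j, (𝓡.R (f i) (f i) (f j) (f j)).re * (ξ i - ξ j)^2 =
      (𝓡.R (e i₁) (e i₁) (e i) (e i)).re := by
    intro i hi
    obtain ⟨hi0, hi1⟩ := hrestmem i hi
    rw [sum_split]
    have t1 : (𝓡.R (f i) (f i) (f i₀) (f i₀)).re * (ξ i - ξ i₀)^2 =
        (𝓡.R (e i₁) (e i₁) (e i) (e i)).re / 2 := by
      rw [hfr i hi0 hi1, 𝓡.pair_symm (e i) (e i) (f i₀) (f i₀), hξ0, hξj i hi0 hi1]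
      have := hS0jre i hi0
      norm_num
      linarith
    have t2 : (𝓡.R (f i) (f i) (f i₁) (f i₁)).re * (ξ i - ξ i₁)^2 =
        (𝓡.R (e i₁) (e i₁) (e i) (e i)).re / 2 := by
      rw [hfr i hi0 hi1, 𝓡.pair_symm (e i) (e i) (f i₁) (f i₁), hξ1, hξj i hi0 hi1]
      have := hS1jre i hi0
      norm_num
      linarith
    have t3 : ∑ j ∈ rest, (𝓡.R (f i) (f i) (f j) (f j)).re * (ξ i - ξ j)^2 = 0 := by
      apply Finset.sum_eq_zero
      intro j hj
      obtain ⟨hj0, hj1⟩ := hrestmem j hj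
      rw [hξj i hi0 hi1, hξj j hj0 hj1]
      ring
    rw [t1, t2, t3]
    ring
  rw [sum_split (fun i => ∑ j, (𝓡.R (f i) (f i) (f j) (f j)).re * (ξ i - ξ j)^2)] at hineq
  rw [hrow0, hrow1, Finset.sum_congr rfl hrowr] at hineq
  -- conclude
  rw [← hins1, Finset.sum_insert h1notin]
  linarith


end
end

section
/- Let $\mathcal{R}$ be an algebraic Kähler curvature tensor on $\mathbb{C}^n$ and let $e_1, e_2$ be orthonormal. Define $h_1 = \frac{1+i}{2}e_1 + \frac{1-i}{2}e_2$, $h_2 = \frac{1-i}{2}e_1 + \frac{1+i}{2}e_2$, $v_1 = \frac{1}{\sqrt2}(e_1 + e_2)$, $v_2 = \frac{1}{\sqrt2}(e_1 - e_2)$. Then $\mathcal{R}(e_1,\bar e_1,e_2,\bar e_2) + \mathcal{R}(h_1, \bar h_1, h_2, \bar h_2) = \frac{1}{2}\left( \mathcal{R}(v_1,\bar v_1,v_1,\bar v_1) + \mathcal{R}(v_2,\bar v_2,v_2,\bar v_2) \right)$. -/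
open Finset

noncomputable section


lemma AKCT.add_trd {n : ℕ} (𝓡 : AKCT n) (X Y Z Z' W) :
    𝓡.R X Y (Z + Z') W = 𝓡.R X Y Z W + 𝓡.R X Y Z' W := by
  rw [𝓡.pair_symm, 𝓡.add_fst, 𝓡.pair_symm Z, 𝓡.pair_symm Z']

lemma AKCT.smul_trd {n : ℕ} (𝓡 : AKCT n) (a : ℂ) (X Y Z W) :
    𝓡.R X Y (a • Z) W = a * 𝓡.R X Y Z W := by
  rw [𝓡.pair_symm, 𝓡.smul_fst, 𝓡.pair_symm Z]

lemma AKCT.add_fth {n : ℕ} (𝓡 : AKCT n) (X Y Z W W') :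
    𝓡.R X Y Z (W + W') = 𝓡.R X Y Z W + 𝓡.R X Y Z W' := by
  rw [𝓡.pair_symm, 𝓡.add_snd, 𝓡.pair_symm Z, 𝓡.pair_symm Z]

lemma AKCT.smul_fth {n : ℕ} (𝓡 : AKCT n) (a : ℂ) (X Y Z W) :
    𝓡.R X Y Z (a • W) = (starRingEnd ℂ) a * 𝓡.R X Y Z W := by
  rw [𝓡.pair_symm, 𝓡.smul_snd, 𝓡.pair_symm Z]

/-- the averaging identity (3.6):
`R(e₁,ē₁,e₂,ē₂) + R(h₁,h̄₁,h₂,h̄₂) = ½(R(v₁,v̄₁,v₁,v̄₁) + R(v₂,v̄₂,v₂,v̄₂))`. -/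
theorem stmt6 (n : ℕ) (𝓡 : AKCT n) (e₁ e₂ : Fin n → ℂ) (horth : OrthPair e₁ e₂)
    (h₁ h₂ v₁ v₂ : Fin n → ℂ)
    (hh₁ : h₁ = ((1 + Complex.I) / 2) • e₁ + ((1 - Complex.I) / 2) • e₂)
    (hh₂ : h₂ = ((1 - Complex.I) / 2) • e₁ + ((1 + Complex.I) / 2) • e₂)
    (hv₁ : v₁ = ((Real.sqrt 2 : ℂ))⁻¹ • (e₁ + e₂))
    (hv₂ : v₂ = ((Real.sqrt 2 : ℂ))⁻¹ • (e₁ - e₂)) :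
    𝓡.R e₁ e₁ e₂ e₂ + 𝓡.R h₁ h₁ h₂ h₂ =
      (1 / 2) * (𝓡.R v₁ v₁ v₁ v₁ + 𝓡.R v₂ v₂ v₂ v₂) := by
  have hsub : e₁ - e₂ = e₁ + (-1 : ℂ) • e₂ := by rw [neg_one_smul, ← sub_eq_add_neg]
  subst hh₁ hh₂ hv₁ hv₂
  rw [hsub]
  have hs : ((Real.sqrt 2 : ℂ)) * ((Real.sqrt 2 : ℂ)) = 2 := by
    norm_cast
    rw [Real.mul_self_sqrt (by norm_num : (0:ℝ) ≤ 2)]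
  have hq : ((Real.sqrt 2 : ℂ))⁻¹ ^ 4 = 1 / 4 := by
    rw [inv_pow, show ((Real.sqrt 2 : ℂ)) ^ 4 =
      ((Real.sqrt 2 : ℂ) * (Real.sqrt 2 : ℂ)) * ((Real.sqrt 2 : ℂ) * (Real.sqrt 2 : ℂ)) from by
        ring, hs]
    norm_num
  simp only [𝓡.add_fst, 𝓡.smul_fst, 𝓡.add_snd, 𝓡.smul_snd, 𝓡.add_trd, 𝓡.smul_trd,
    𝓡.add_fth, 𝓡.smul_fth, map_div₀, map_add, map_sub, map_one, map_inv₀, map_neg,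
    Complex.conj_I, Complex.conj_ofReal, map_ofNat]
  rw [show 𝓡.R e₂ e₂ e₁ e₁ = 𝓡.R e₁ e₁ e₂ e₂ from 𝓡.pair_symm _ _ _ _,
    show 𝓡.R e₁ e₂ e₂ e₁ = 𝓡.R e₁ e₁ e₂ e₂ from by
      rw [𝓡.kahler_symm, 𝓡.pair_symm],
    show 𝓡.R e₂ e₁ e₁ e₂ = 𝓡.R e₁ e₁ e₂ e₂ from 𝓡.kahler_symm _ _ _ _,
    show 𝓡.R e₂ e₁ e₁ e₁ = 𝓡.R e₁ e₁ e₂ e₁ from 𝓡.kahler_symm _ _ _ _,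
    show 𝓡.R e₁ e₂ e₁ e₁ = 𝓡.R e₁ e₁ e₁ e₂ from 𝓡.pair_symm _ _ _ _,
    show 𝓡.R e₂ e₂ e₂ e₁ = 𝓡.R e₂ e₁ e₂ e₂ from 𝓡.pair_symm _ _ _ _,
    show 𝓡.R e₂ e₂ e₁ e₂ = 𝓡.R e₁ e₂ e₂ e₂ from 𝓡.kahler_symm _ _ _ _]
  ring_nf
  rw [hq]
  ring_nf
  simp only [Complex.I_sq, Complex.I_pow_four]
  ring

end
end

section
/- Let $\mathcal{R}$ be an algebraic Kähler curvature tensor on $\mathbb{C}^n$, $n \geq 2$. For $\mathfrak{u} \in U(n)$, let $(f_1,\dots,f_n)$ be the unitary frame obtained by applying $\mathfrak{u}$ to the standard basis. Define $F(ij)(\mathfrak{u}) = \mathcal{R}(f_i,\bar f_i,f_j,\bar f_j)$ for $i \neq j$ and $G(i)(\mathfrak{u}) = \mathcal{R}(f_i,\bar f_i,f_i,\bar f_i)$. Then with respect to Haar probability measure $\nu$ on $U(n)$: $2\int_{U(n)} F(ij)\,d\nu = \int_{U(n)} G(k)\,d\nu$ for all $i \neq j$ and all $k$; in particular both sides equal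 a constant $K$ independent of the indices. -/
open Finset

noncomputable section

open MeasureTheory

/-- The unitary frame obtained by applying `u ∈ U(n)` to the standard basis:
`f_j = ∑_k u_{kj} e_k`, i.e. the `j`-th column of `u`. -/
def uFrame {n : ℕ} (u : Matrix.unitaryGroup (Fin n) ℂ) : Fin n → Fin n → ℂ :=
  fun j m => (u : Matrix (Fin n) (Fin n) ℂ) m j

/-! Right-translates of a left Haar probability measure on the compact group `U(n)` are again
left Haar probability measures, so `ν` is right invariant too, and the frame of `u * w` is the frame
of `u` recombined by the columns of `w`. Embedding the `2 × 2` unitaries `u₀ = [[ω, ω̄], [ω̄, ω]]`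
and `v₀ = [[ω, ω], [ω, -ω]]`, `ω = (1 + i)/2`, in the `(i, j)`-plane, multilinearity and the
symmetries of `R` give `F(ij)(u) + F(ij)(u u₀) = (G(i)(u v₀) + G(j)(u v₀))/2`. Integrating,
`2 ∫ F(ij) = (∫ G(i) + ∫ G(j))/2`, and `∫ G(i) = ∫ G(k)` because swapping two frame vectors is
also a right translation. -/

namespace Matrix

variable {ι κ R : Type*} [Fintype ι] [DecidableEq ι] [DecidableEq κ] [CommRing R] [StarRing R]

theorem conjTranspose_mul_self_submatrix_one {e : κ → ι} (he : Function.Injective e) :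
    ((1 : Matrix ι ι R).submatrix id e)ᴴ * (1 : Matrix ι ι R).submatrix id e = 1 := by
  rw [conjTranspose_submatrix, conjTranspose_one, ← submatrix_mul _ _ _ _ _ Function.bijective_id,
    Matrix.one_mul, submatrix_one _ he]

variable [Fintype κ]

/-- `U` acting on the span of the basis vectors `e a`, and as the identity on their
orthogonal complement. -/
def extendUnitary (e : κ → ι) (U : Matrix κ κ R) : Matrix ι ι R :=
  1 + (1 : Matrix ι ι R).submatrix id e * (U - 1) * ((1 : Matrix ι ι R).submatrix id e)ᴴ

theorem extendUnitary_mem_unitaryGroup {e : κ → ι} (he : Function.Injective e) {U : Matrix κ κ R}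
    (hU : U ∈ unitaryGroup κ R) : extendUnitary e U ∈ unitaryGroup ι R := by
  have hP := conjTranspose_mul_self_submatrix_one (R := R) he
  have hA : (U - 1)ᴴ + (U - 1) + (U - 1)ᴴ * (U - 1) = 0 := by
    rw [conjTranspose_sub, conjTranspose_one, Matrix.sub_mul, Matrix.mul_sub, Matrix.mul_sub,
      ← star_eq_conjTranspose, (mem_unitaryGroup_iff').mp hU, Matrix.one_mul, Matrix.mul_one,
      Matrix.mul_one]
    abel
  rw [mem_unitaryGroup_iff', extendUnitary, star_eq_conjTranspose]
  generalize (1 : Matrix ι ι R).submatrix id e = P at hP ⊢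
  calc (1 + P * (U - 1) * Pᴴ)ᴴ * (1 + P * (U - 1) * Pᴴ)
      = 1 + P * ((U - 1)ᴴ + (U - 1) + (U - 1)ᴴ * (Pᴴ * P) * (U - 1)) * Pᴴ := by
        simp only [conjTranspose_add, conjTranspose_mul, conjTranspose_conjTranspose,
          conjTranspose_one, Matrix.add_mul, Matrix.mul_add, Matrix.one_mul, Matrix.mul_one,
          Matrix.mul_assoc]
        abel
    _ = 1 := by rw [hP, Matrix.mul_one, hA, Matrix.mul_zero, Matrix.zero_mul, add_zero]

theorem extendUnitary_mul_submatrix_one {e : κ → ι} (he : Function.Injective e)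
    (U : Matrix κ κ R) :
    extendUnitary e U * (1 : Matrix ι ι R).submatrix id e
      = (1 : Matrix ι ι R).submatrix id e * U := by
  rw [extendUnitary, Matrix.add_mul, Matrix.one_mul, Matrix.mul_assoc,
    conjTranspose_mul_self_submatrix_one he, Matrix.mul_one, Matrix.mul_sub, Matrix.mul_one]
  abel

end Matrix

instance {ι 𝕜 : Type*} [Fintype ι] [DecidableEq ι] [RCLike 𝕜] :
    CompactSpace (Matrix.unitaryGroup ι 𝕜) :=
  isCompact_iff_compactSpace.mp <|
    IsCompact.of_isClosed_subset
      (s := Set.univ.pi fun _ => Set.univ.pi fun _ => Metric.closedBall 0 1)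
      (isCompact_univ_pi fun _ => isCompact_univ_pi fun _ => isCompact_closedBall (0 : 𝕜) 1)
      (isClosed_unitary (R := Matrix ι ι 𝕜)) fun _ hU => by
        simpa [Set.mem_pi] using entry_norm_bound_of_unitary hU

theorem MeasureTheory.Measure.isMulRightInvariant_of_isProbabilityMeasure {G : Type*} [Group G]
    [TopologicalSpace G] [IsTopologicalGroup G] [CompactSpace G] [MeasurableSpace G]
    [BorelSpace G] (ν : Measure G) [ν.IsMulLeftInvariant] [IsProbabilityMeasure ν] :
    ν.IsMulRightInvariant := by
  have isHaar (μ : Measure G) [μ.IsMulLeftInvariant] [IsProbabilityMeasure μ] : μ.IsHaarMeasure :=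
    isHaarMeasure_of_isCompact_nonempty_interior μ Set.univ isCompact_univ (by simp) (by simp)
      (by simp)
  refine ⟨fun g => ?_⟩
  have : IsProbabilityMeasure (ν.map (· * g)) :=
    isProbabilityMeasure_map (measurable_mul_const g).aemeasurable
  have := isHaar ν
  have := isHaar (ν.map (· * g))
  exact isHaarMeasure_eq_of_isProbabilityMeasure _ _

section PlaneUnitary

variable {n : ℕ} {i j : Fin n}

def planeUnitary (hij : i ≠ j) (U : Matrix.unitaryGroup (Fin 2) ℂ) :
    Matrix.unitaryGroup (Fin n) ℂ :=
  ⟨Matrix.extendUnitary ![i, j] U,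
    Matrix.extendUnitary_mem_unitaryGroup (injective_pair_iff_ne.mpr hij) U.2⟩

theorem uFrame_mul_planeUnitary (hij : i ≠ j) (u : Matrix.unitaryGroup (Fin n) ℂ)
    (U : Matrix.unitaryGroup (Fin 2) ℂ) (a : Fin 2) :
    uFrame (u * planeUnitary hij U) (![i, j] a)
      = (U : Matrix (Fin 2) (Fin 2) ℂ) 0 a • uFrame u i
        + (U : Matrix (Fin 2) (Fin 2) ℂ) 1 a • uFrame u j := by
  have h := congrArg ((u : Matrix (Fin n) (Fin n) ℂ) * ·)
    (Matrix.extendUnitary_mul_submatrix_one (injective_pair_iff_ne.mpr hij)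
      (U : Matrix (Fin 2) (Fin 2) ℂ))
  funext m
  have hm := congrFun (congrFun h m) a
  simp only [← Matrix.mul_assoc] at hm
  simpa [uFrame, planeUnitary, Matrix.mul_apply, Matrix.one_apply, mul_comm] using hm

theorem continuous_uFrame (i : Fin n) :
    Continuous fun u : Matrix.unitaryGroup (Fin n) ℂ => uFrame u i :=
  continuous_pi fun m => continuous_subtype_val.matrix_elem m i

end PlaneUnitary

local notation "ω" => ((1 + Complex.I) / 2 : ℂ)

def swapUnitary : Matrix.unitaryGroup (Fin 2) ℂ :=
  ⟨!![0, 1; 1, 0], by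
    rw [Matrix.mem_unitaryGroup_iff']
    ext a b
    fin_cases a <;> fin_cases b <;> simp [Matrix.mul_apply]⟩

def rotU₀ : Matrix.unitaryGroup (Fin 2) ℂ :=
  ⟨!![ω, starRingEnd ℂ ω; starRingEnd ℂ ω, ω], by
    rw [Matrix.mem_unitaryGroup_iff']
    ext a b
    fin_cases a <;> fin_cases b <;> simp [Matrix.mul_apply, map_ofNat] <;> grind [Complex.I_sq]⟩

/-- The `45°` rotation times the phase `(1 + i)/√2`, which keeps all entries in `ℚ(i)`. -/
def rotV₀ : Matrix.unitaryGroup (Fin 2) ℂ :=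
  ⟨!![ω, ω; ω, -ω], by
    rw [Matrix.mem_unitaryGroup_iff']
    ext a b
    fin_cases a <;> fin_cases b <;> simp [Matrix.mul_apply, map_ofNat] <;> grind [Complex.I_sq]⟩

namespace AKCT

variable {n : ℕ} (𝓡 : AKCT n)

theorem smul_trd_s8 (a : ℂ) (X Y Z W) : 𝓡.R X Y (a • Z) W = a * 𝓡.R X Y Z W := by
  rw [𝓡.pair_symm, 𝓡.smul_fst, 𝓡.pair_symm Z]

theorem add_trd_s8 (X Y Z Z' W) : 𝓡.R X Y (Z + Z') W = 𝓡.R X Y Z W + 𝓡.R X Y Z' W := by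
  rw [𝓡.pair_symm, 𝓡.add_fst, 𝓡.pair_symm Z, 𝓡.pair_symm Z']

theorem smul_fth_s8 (a : ℂ) (X Y Z W) : 𝓡.R X Y Z (a • W) = starRingEnd ℂ a * 𝓡.R X Y Z W := by
  rw [𝓡.pair_symm, 𝓡.smul_snd, 𝓡.pair_symm Z]

theorem add_fth_s8 (X Y Z W W') : 𝓡.R X Y Z (W + W') = 𝓡.R X Y Z W + 𝓡.R X Y Z W' := by
  rw [𝓡.pair_symm, 𝓡.add_snd, 𝓡.pair_symm Z, 𝓡.pair_symm Z W']

theorem sum_fst {ι : Type*} (s : Finset ι) (X : ι → Fin n → ℂ) (Y Z W) :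
    𝓡.R (∑ a ∈ s, X a) Y Z W = ∑ a ∈ s, 𝓡.R (X a) Y Z W :=
  map_sum (AddMonoidHom.mk' (𝓡.R · Y Z W) fun X X' => 𝓡.add_fst X X' Y Z W) X s

theorem sum_snd {ι : Type*} (s : Finset ι) (Y : ι → Fin n → ℂ) (X Z W) :
    𝓡.R X (∑ a ∈ s, Y a) Z W = ∑ a ∈ s, 𝓡.R X (Y a) Z W :=
  map_sum (AddMonoidHom.mk' (𝓡.R X · Z W) fun Y Y' => 𝓡.add_snd X Y Y' Z W) Y s

theorem sum_trd {ι : Type*} (s : Finset ι) (Z : ι → Fin n → ℂ) (X Y W) :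
    𝓡.R X Y (∑ a ∈ s, Z a) W = ∑ a ∈ s, 𝓡.R X Y (Z a) W := by
  simp only [𝓡.pair_symm X Y, 𝓡.sum_fst]

theorem sum_fth {ι : Type*} (s : Finset ι) (W : ι → Fin n → ℂ) (X Y Z) :
    𝓡.R X Y Z (∑ a ∈ s, W a) = ∑ a ∈ s, 𝓡.R X Y Z (W a) := by
  simp only [𝓡.pair_symm X Y, 𝓡.sum_snd]

theorem comm_snd_fth (X Y Z W) : 𝓡.R X Y Z W = 𝓡.R X W Z Y := by
  rw [𝓡.pair_symm, 𝓡.kahler_symm]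

theorem eq_sum_basis (X Y Z W : Fin n → ℂ) :
    𝓡.R X Y Z W = ∑ a, ∑ b, ∑ c, ∑ d, X a * starRingEnd ℂ (Y b) * Z c * starRingEnd ℂ (W d) *
      𝓡.R (Pi.single a 1) (Pi.single b 1) (Pi.single c 1) (Pi.single d 1) := by
  conv_lhs => rw [pi_eq_sum_univ' X, pi_eq_sum_univ' Y, pi_eq_sum_univ' Z, pi_eq_sum_univ' W]
  simp only [𝓡.sum_fst, 𝓡.sum_snd, 𝓡.sum_trd, 𝓡.sum_fth, 𝓡.smul_fst, 𝓡.smul_snd, 𝓡.smul_trd_s8,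
    𝓡.smul_fth_s8, mul_assoc]

theorem continuous_R {α : Type*} [TopologicalSpace α] {X Y Z W : α → Fin n → ℂ}
    (hX : Continuous X) (hY : Continuous Y) (hZ : Continuous Z) (hW : Continuous W) :
    Continuous fun x => 𝓡.R (X x) (Y x) (Z x) (W x) := by
  refine Continuous.congr ?_ fun x => (𝓡.eq_sum_basis (X x) (Y x) (Z x) (W x)).symm
  fun_prop

-- By the two symmetries `R(X,Ȳ,Z,W̄)` only depends on `{X, Z}` and `{Y, W}`; `h₁`–`h₇`
-- identify the 16 monomials in `V, W` accordingly, after which the identity is ring arithmetic.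
theorem bisectional_add_rotated (V W : Fin n → ℂ) :
    𝓡.R V V W W + 𝓡.R (ω • V + starRingEnd ℂ ω • W) (ω • V + starRingEnd ℂ ω • W)
        (starRingEnd ℂ ω • V + ω • W) (starRingEnd ℂ ω • V + ω • W)
      = (𝓡.R (ω • V + ω • W) (ω • V + ω • W) (ω • V + ω • W) (ω • V + ω • W)
          + 𝓡.R (ω • V + (-ω) • W) (ω • V + (-ω) • W) (ω • V + (-ω) • W) (ω • V + (-ω) • W))
          / 2 := by
  have h₁ := 𝓡.pair_symm W W V V
  have h₂ := 𝓡.kahler_symm V W W V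
  have h₃ := 𝓡.kahler_symm W V V W
  have h₄ := 𝓡.comm_snd_fth V W V V
  have h₅ := 𝓡.kahler_symm V V W V
  have h₆ := 𝓡.comm_snd_fth W V W W
  have h₇ := 𝓡.kahler_symm W W V W
  simp only [𝓡.add_fst, 𝓡.add_snd, 𝓡.add_trd_s8, 𝓡.add_fth_s8, 𝓡.smul_fst, 𝓡.smul_snd, 𝓡.smul_trd_s8,
    𝓡.smul_fth_s8, map_div₀, map_add, map_neg, map_one, map_ofNat, Complex.conj_I]
  grind [Complex.I_sq]

def frameCurv (i j : Fin n) (u : Matrix.unitaryGroup (Fin n) ℂ) : ℝ :=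
  (𝓡.R (uFrame u i) (uFrame u i) (uFrame u j) (uFrame u j)).re

theorem continuous_frameCurv (i j : Fin n) : Continuous (𝓡.frameCurv i j) :=
  Complex.continuous_re.comp <| 𝓡.continuous_R (continuous_uFrame i) (continuous_uFrame i)
    (continuous_uFrame j) (continuous_uFrame j)

theorem frameCurv_mul_swapUnitary {i j : Fin n} (hij : i ≠ j) (u) :
    𝓡.frameCurv i i (u * planeUnitary hij swapUnitary) = 𝓡.frameCurv j j u := by
  have h : uFrame (u * planeUnitary hij swapUnitary) i = uFrame u j := by
    simpa [swapUnitary] using uFrame_mul_planeUnitary hij u swapUnitary 0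
  simp only [frameCurv, h]

theorem frameCurv_add_frameCurv_mul_rotU₀ {i j : Fin n} (hij : i ≠ j) (u) :
    𝓡.frameCurv i j u + 𝓡.frameCurv i j (u * planeUnitary hij rotU₀)
      = (𝓡.frameCurv i i (u * planeUnitary hij rotV₀)
          + 𝓡.frameCurv j j (u * planeUnitary hij rotV₀)) / 2 := by
  have hu0 :
      uFrame (u * planeUnitary hij rotU₀) i = ω • uFrame u i + starRingEnd ℂ ω • uFrame u j := by
    simpa [rotU₀] using uFrame_mul_planeUnitary hij u rotU₀ 0
  have hu1 :
      uFrame (u * planeUnitary hij rotU₀) j = starRingEnd ℂ ω • uFrame u i + ω • uFrame u j := by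
    simpa [rotU₀] using uFrame_mul_planeUnitary hij u rotU₀ 1
  have hv0 : uFrame (u * planeUnitary hij rotV₀) i = ω • uFrame u i + ω • uFrame u j := by
    simpa [rotV₀] using uFrame_mul_planeUnitary hij u rotV₀ 0
  have hv1 : uFrame (u * planeUnitary hij rotV₀) j = ω • uFrame u i + (-ω) • uFrame u j := by
    simpa [rotV₀] using uFrame_mul_planeUnitary hij u rotV₀ 1
  rw [frameCurv, frameCurv, frameCurv, frameCurv, hu0, hu1, hv0, hv1]
  simpa only [Complex.add_re, Complex.div_ofNat_re] using
    congrArg Complex.re (𝓡.bisectional_add_rotated (uFrame u i) (uFrame u j))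

section Integral

variable [MeasurableSpace (Matrix.unitaryGroup (Fin n) ℂ)]
  [BorelSpace (Matrix.unitaryGroup (Fin n) ℂ)] (ν : Measure (Matrix.unitaryGroup (Fin n) ℂ))

theorem integrable_frameCurv [IsFiniteMeasure ν] (i j : Fin n) :
    Integrable (𝓡.frameCurv i j) ν :=
  (𝓡.continuous_frameCurv i j).integrable_of_hasCompactSupport (.of_compactSpace _)

theorem integral_frameCurv_self_eq [ν.IsMulRightInvariant] (k l : Fin n) :
    ∫ u, 𝓡.frameCurv k k u ∂ν = ∫ u, 𝓡.frameCurv l l u ∂ν := by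
  rcases eq_or_ne k l with rfl | hkl
  · rfl
  · simp only [← 𝓡.frameCurv_mul_swapUnitary hkl, integral_mul_right_eq_self]

theorem two_mul_integral_frameCurv [ν.IsMulRightInvariant] [IsFiniteMeasure ν] {i j : Fin n}
    (hij : i ≠ j) (k : Fin n) :
    2 * ∫ u, 𝓡.frameCurv i j u ∂ν = ∫ u, 𝓡.frameCurv k k u ∂ν := by
  calc 2 * ∫ u, 𝓡.frameCurv i j u ∂ν
      = ∫ u, (𝓡.frameCurv i j u + 𝓡.frameCurv i j (u * planeUnitary hij rotU₀)) ∂ν := by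
        rw [integral_add (𝓡.integrable_frameCurv ν i j)
          ((𝓡.integrable_frameCurv ν i j).comp_mul_right _), integral_mul_right_eq_self]
        ring
    _ = (∫ u, 𝓡.frameCurv i i (u * planeUnitary hij rotV₀) ∂ν
          + ∫ u, 𝓡.frameCurv j j (u * planeUnitary hij rotV₀) ∂ν) / 2 := by
        simp only [𝓡.frameCurv_add_frameCurv_mul_rotU₀ hij]
        rw [integral_div, integral_add ((𝓡.integrable_frameCurv ν i i).comp_mul_right _)
          ((𝓡.integrable_frameCurv ν j j).comp_mul_right _)]
    _ = ∫ u, 𝓡.frameCurv k k u ∂ν := by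
        rw [integral_mul_right_eq_self, integral_mul_right_eq_self,
          𝓡.integral_frameCurv_self_eq ν i k, 𝓡.integral_frameCurv_self_eq ν j k]
        ring

end Integral

end AKCT

theorem stmt8_general (n : ℕ)
    [MeasurableSpace (Matrix.unitaryGroup (Fin n) ℂ)] [BorelSpace (Matrix.unitaryGroup (Fin n) ℂ)]
    (𝓡 : AKCT n)
    (ν : Measure (Matrix.unitaryGroup (Fin n) ℂ))
    [ν.IsMulLeftInvariant] [IsProbabilityMeasure ν]
    (F : Fin n → Fin n → Matrix.unitaryGroup (Fin n) ℂ → ℝ)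
    (G : Fin n → Matrix.unitaryGroup (Fin n) ℂ → ℝ)
    (hF : ∀ i j u, F i j u = (𝓡.R (uFrame u i) (uFrame u i) (uFrame u j) (uFrame u j)).re)
    (hG : ∀ i u, G i u = (𝓡.R (uFrame u i) (uFrame u i) (uFrame u i) (uFrame u i)).re) :
    ∀ i j k : Fin n, i ≠ j → 2 * ∫ u, F i j u ∂ν = ∫ u, G k u ∂ν := by
  intro i j k hij
  have := ν.isMulRightInvariant_of_isProbabilityMeasure
  rw [show F i j = 𝓡.frameCurv i j from funext (hF i j),
    show G k = 𝓡.frameCurv k k from funext (hG k)]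
  exact 𝓡.two_mul_integral_frameCurv ν hij k

/-- Claim in Lemma 3.2: with respect to Haar probability measure on
`U(n)`, `2∫ F(ij) dν = ∫ G(k) dν` for all `i ≠ j` and all `k`. -/
theorem stmt8 (n : ℕ) (hn : 2 ≤ n)
    [MeasurableSpace (Matrix.unitaryGroup (Fin n) ℂ)] [BorelSpace (Matrix.unitaryGroup (Fin n) ℂ)]
    (𝓡 : AKCT n)
    (ν : Measure (Matrix.unitaryGroup (Fin n) ℂ))
    [ν.IsMulLeftInvariant] [IsProbabilityMeasure ν]
    (F : Fin n → Fin n → Matrix.unitaryGroup (Fin n) ℂ → ℝ)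
    (G : Fin n → Matrix.unitaryGroup (Fin n) ℂ → ℝ)
    (hF : ∀ i j u, F i j u = (𝓡.R (uFrame u i) (uFrame u i) (uFrame u j) (uFrame u j)).re)
    (hG : ∀ i u, G i u = (𝓡.R (uFrame u i) (uFrame u i) (uFrame u i) (uFrame u i)).re) :
    ∀ i j k : Fin n, i ≠ j → 2 * ∫ u, F i j u ∂ν = ∫ u, G k u ∂ν :=
  stmt8_general n 𝓡 ν F G hF hG

end
end

section
/- Let $\mathcal{R}$ be an algebraic Kähler curvature tensor on $\mathbb{C}^n$, $n \geq 2$, and let $S = \sum_{i,j=1}^n \mathcal{R}(e_i,\bar e_i,e_j,\bar e_j)$ denote its scalar curvature with respect to the standard orthonormal basis (a quantity independent of the choice of unitary frame). Then $S = \frac{n(n+1)}{2} \int_{U(n)} \mathcal{R}(f_1,\bar f_1,f_1,\bar f_1)\,d\nu(\mathfrak{u})$, where $f_1$ is the first vector of the frame obtained by applying $\mathfrak{u} \in U(n)$ to the standard basis and $\nu$ is Haar probability measure. -/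
open Finset

noncomputable section

open MeasureTheory

/-! Expanding `𝓡` in the standard basis, the Haar average of `𝓡(f, f̄, f, f̄)` for the column
`f = u e_z` becomes `∑ M_{ijkl} 𝓡_{ijkl}` with the fourth moments
`M_{ijkl} = ∫ f_i f̄_j f_k f̄_l dν`. Left invariance makes `M` invariant under every unitary:
diagonal phases kill all moments except `M_{iikk}` and `M_{ikki}`, permutations identify all
`M_{iiii}` and all `M_{iikk}` (`i ≠ k`), a Hadamard rotation in a coordinate plane gives
`M_{pppp} = 2 M_{ppqq}`, and `∑_{i,k} M_{iikk} = 1` (the column is a unit vector) forces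
`M_{ijkl} = (δ_{ij} δ_{kl} + δ_{il} δ_{jk}) / (n (n + 1))`. By the Kähler symmetry both
contractions of `𝓡` are the scalar curvature. -/

section

open Matrix ComplexConjugate

variable {n : ℕ}

lemma sum_smul_stdVec (v : Fin n → ℂ) : ∑ i, v i • stdVec i = v := by
  ext m
  simp [stdVec]

namespace AKCT

variable (𝓡 : AKCT n)

def linearFst (Y Z W : Fin n → ℂ) : (Fin n → ℂ) →ₗ[ℂ] ℂ where
  toFun X := 𝓡.R X Y Z W
  map_add' X X' := 𝓡.add_fst X X' Y Z W
  map_smul' a X := 𝓡.smul_fst a X Y Z W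

def semilinearSnd (X Z W : Fin n → ℂ) : (Fin n → ℂ) →ₛₗ[starRingEnd ℂ] ℂ where
  toFun Y := 𝓡.R X Y Z W
  map_add' Y Y' := 𝓡.add_snd X Y Y' Z W
  map_smul' a Y := 𝓡.smul_snd a X Y Z W

lemma R_eq_sum_fst (X Y Z W : Fin n → ℂ) :
    𝓡.R X Y Z W = ∑ i, X i * 𝓡.R (stdVec i) Y Z W := by
  conv_lhs => rw [← sum_smul_stdVec X]
  exact map_sum (𝓡.linearFst Y Z W) _ _ |>.trans (by simp [linearFst])

lemma R_eq_sum_snd (X Y Z W : Fin n → ℂ) :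
    𝓡.R X Y Z W = ∑ j, conj (Y j) * 𝓡.R X (stdVec j) Z W := by
  conv_lhs => rw [← sum_smul_stdVec Y]
  exact map_sum (𝓡.semilinearSnd X Z W) _ _ |>.trans (by simp [semilinearSnd])

lemma R_eq_sum_thd (X Y Z W : Fin n → ℂ) :
    𝓡.R X Y Z W = ∑ k, Z k * 𝓡.R X Y (stdVec k) W := by
  simp only [𝓡.kahler_symm X Y, 𝓡.R_eq_sum_fst Z]

lemma R_eq_sum_fth (X Y Z W : Fin n → ℂ) :
    𝓡.R X Y Z W = ∑ l, conj (W l) * 𝓡.R X Y Z (stdVec l) := by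
  simp only [𝓡.pair_symm X Y, 𝓡.R_eq_sum_snd Z W]

lemma R_eq_sum (X Y Z W : Fin n → ℂ) :
    𝓡.R X Y Z W = ∑ i, ∑ j, ∑ k, ∑ l, X i * conj (Y j) * (Z k * conj (W l)) *
      𝓡.R (stdVec i) (stdVec j) (stdVec k) (stdVec l) := by
  simp only [𝓡.R_eq_sum_fst X, 𝓡.R_eq_sum_snd _ Y, 𝓡.R_eq_sum_thd _ _ Z, 𝓡.R_eq_sum_fth _ _ _ W,
    Finset.mul_sum]
  ring_nf

end AKCT

section UnitaryMatrices

lemma diagonal_mem_unitaryGroup {ι α : Type*} [Fintype ι] [DecidableEq ι] [CommRing α]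
    [StarRing α] {d : ι → α} (hd : ∀ i, star (d i) * d i = 1) : diagonal d ∈ unitaryGroup ι α := by
  simp [mem_unitaryGroup_iff', star_eq_conjTranspose, diagonal_conjTranspose, hd]

lemma permMatrix_mem_unitaryGroup {ι α : Type*} [Fintype ι] [DecidableEq ι] [CommRing α]
    [StarRing α] (σ : Equiv.Perm ι) : σ.permMatrix α ∈ unitaryGroup ι α := by
  rw [mem_unitaryGroup_iff', star_eq_conjTranspose, conjTranspose_permMatrix, ← permMatrix_mul,
    mul_inv_cancel, permMatrix_one]

def planeProj (p q : Fin n) : Matrix (Fin n) (Fin n) ℂ := single p p 1 + single q q 1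

def hadamardBlock (p q : Fin n) : Matrix (Fin n) (Fin n) ℂ :=
  single p p 1 + single p q 1 + single q p 1 - single q q 1

lemma star_planeProj (p q : Fin n) : star (planeProj p q) = planeProj p q := by
  simp [planeProj, star_eq_conjTranspose, conjTranspose_single]

lemma star_hadamardBlock (p q : Fin n) : star (hadamardBlock p q) = hadamardBlock p q := by
  simp only [hadamardBlock, star_sub, star_add, star_eq_conjTranspose, conjTranspose_single,
    star_one, sub_left_inj]
  abel

section
variable {p q : Fin n} (hpq : p ≠ q)
include hpq

lemma planeProj_mul_self : planeProj p q * planeProj p q = planeProj p q := by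
  simp [planeProj, add_mul, mul_add, hpq, hpq.symm]

lemma planeProj_mul_hadamardBlock : planeProj p q * hadamardBlock p q = hadamardBlock p q := by
  simp [planeProj, hadamardBlock, add_mul, mul_add, mul_sub, hpq, hpq.symm]

lemma hadamardBlock_mul_planeProj : hadamardBlock p q * planeProj p q = hadamardBlock p q := by
  simp only [hadamardBlock, planeProj, mul_add, add_mul, sub_mul, single_mul_single_same,
    single_mul_single_of_ne, hpq, hpq.symm, ne_eq, not_false_eq_true, mul_one, add_zero, zero_add,
    sub_zero]
  abel

lemma hadamardBlock_mul_self :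
    hadamardBlock p q * hadamardBlock p q = planeProj p q + planeProj p q := by
  simp only [hadamardBlock, planeProj, mul_add, add_mul, mul_sub, sub_mul, single_mul_single_same,
    single_mul_single_of_ne, hpq, hpq.symm, ne_eq, not_false_eq_true, mul_one, add_zero, zero_add,
    sub_zero]
  abel

end

lemma ofReal_inv_sqrt_two_mul_self : (((√2)⁻¹ : ℝ) : ℂ) * (((√2)⁻¹ : ℝ) : ℂ) = 1 / 2 := by
  rw [← Complex.ofReal_mul, ← mul_inv, Real.mul_self_sqrt zero_le_two]
  norm_num

def hadamardUnitary {p q : Fin n} (hpq : p ≠ q) : unitaryGroup (Fin n) ℂ :=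
  ⟨1 - planeProj p q + (((√2)⁻¹ : ℝ) : ℂ) • hadamardBlock p q, by
    rw [mem_unitaryGroup_iff']
    simp only [star_add, star_sub, star_one, star_smul, star_planeProj, star_hadamardBlock,
      Complex.star_def, Complex.conj_ofReal, mul_add, add_mul, mul_sub, sub_mul, smul_mul_assoc,
      mul_smul_comm, one_mul, mul_one, planeProj_mul_self hpq, planeProj_mul_hadamardBlock hpq,
      hadamardBlock_mul_planeProj hpq, hadamardBlock_mul_self hpq]
    linear_combination (norm := module)
      ofReal_inv_sqrt_two_mul_self • (planeProj p q + planeProj p q)⟩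

lemma hadamardUnitary_mulVec_apply {p q : Fin n} (hpq : p ≠ q) (v : Fin n → ℂ) :
    ((hadamardUnitary hpq : Matrix (Fin n) (Fin n) ℂ) *ᵥ v) p =
      (((√2)⁻¹ : ℝ) : ℂ) * (v p + v q) := by
  simp [hadamardUnitary, planeProj, hadamardBlock, add_mulVec, sub_mulVec, smul_mulVec,
    single_mulVec, hpq]

lemma uFrame_mul (g u : unitaryGroup (Fin n) ℂ) (j : Fin n) :
    uFrame (g * u) j = (g : Matrix (Fin n) (Fin n) ℂ) *ᵥ uFrame u j := by
  ext m
  simp [uFrame, mul_apply, mulVec, dotProduct]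

lemma unitaryFrame_uFrame (u : unitaryGroup (Fin n) ℂ) : UnitaryFrame (uFrame u) := by
  intro i j
  have h := congr_fun (congr_fun (UnitaryGroup.star_mul_self u) i) j
  simpa [hermInner, uFrame, mul_apply, one_apply, eq_comm] using h

end UnitaryMatrices

section Moments

def columnMonomial (z i j k l : Fin n) (u : unitaryGroup (Fin n) ℂ) : ℂ :=
  uFrame u z i * conj (uFrame u z j) * (uFrame u z k * conj (uFrame u z l))

lemma continuous_columnMonomial (z i j k l : Fin n) : Continuous (columnMonomial z i j k l) := by
  have h (m : Fin n) : Continuous fun u : unitaryGroup (Fin n) ℂ => uFrame u z m :=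
    (continuous_apply z).comp ((continuous_apply m).comp continuous_subtype_val)
  unfold columnMonomial
  fun_prop

lemma norm_columnMonomial_le_one (z i j k l : Fin n) (u : unitaryGroup (Fin n) ℂ) :
    ‖columnMonomial z i j k l u‖ ≤ 1 := by
  have h (m : Fin n) : ‖uFrame u z m‖ ≤ 1 := entry_norm_bound_of_unitary u.2 m z
  simp only [columnMonomial, norm_mul, Complex.norm_conj]
  exact mul_le_one₀ (mul_le_one₀ (h i) (norm_nonneg _) (h j)) (by positivity)
    (mul_le_one₀ (h k) (norm_nonneg _) (h l))

variable [MeasurableSpace (unitaryGroup (Fin n) ℂ)] (ν : Measure (unitaryGroup (Fin n) ℂ))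

def columnMoment (z i j k l : Fin n) : ℂ := ∫ u, columnMonomial z i j k l u ∂ν

lemma columnMoment_comm (z i j k l : Fin n) :
    columnMoment ν z i j k l = columnMoment ν z k j i l := by
  simp only [columnMoment, columnMonomial, mul_comm, mul_left_comm]

lemma columnMoment_pair_comm (z i j k l : Fin n) :
    columnMoment ν z i j k l = columnMoment ν z k l i j := by
  simp only [columnMoment, columnMonomial, mul_comm]

variable [BorelSpace (unitaryGroup (Fin n) ℂ)]

lemma integrable_columnMonomial [IsFiniteMeasure ν] (z i j k l : Fin n) :
    Integrable (columnMonomial z i j k l) ν :=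
  .of_bound (continuous_columnMonomial z i j k l).aestronglyMeasurable 1
    (.of_forall (norm_columnMonomial_le_one z i j k l))

lemma integrable_and_integral_sum_columnMonomial [IsFiniteMeasure ν] (s : Finset (Fin n))
    (z : Fin n) (c : Fin n → Fin n → Fin n → Fin n → ℂ) :
    Integrable (fun u => ∑ i ∈ s, ∑ j ∈ s, ∑ k ∈ s, ∑ l ∈ s,
      columnMonomial z i j k l u * c i j k l) ν ∧
    ∫ u, ∑ i ∈ s, ∑ j ∈ s, ∑ k ∈ s, ∑ l ∈ s, columnMonomial z i j k l u * c i j k l ∂ν =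
      ∑ i ∈ s, ∑ j ∈ s, ∑ k ∈ s, ∑ l ∈ s, columnMoment ν z i j k l * c i j k l := by
  have h4 (i j k l) := (integrable_columnMonomial ν z i j k l).mul_const (c i j k l)
  have h3 (i j k) := integrable_finsetSum s fun l _ => h4 i j k l
  have h2 (i j) := integrable_finsetSum s fun k _ => h3 i j k
  have h1 (i) := integrable_finsetSum s fun j _ => h2 i j
  refine ⟨integrable_finsetSum s fun i _ => h1 i, ?_⟩
  rw [integral_finsetSum s fun i _ => h1 i]
  refine sum_congr rfl fun i _ => ?_
  rw [integral_finsetSum s fun j _ => h2 i j]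
  refine sum_congr rfl fun j _ => ?_
  rw [integral_finsetSum s fun k _ => h3 i j k]
  refine sum_congr rfl fun k _ => ?_
  rw [integral_finsetSum s fun l _ => h4 i j k l]
  exact sum_congr rfl fun l _ => integral_mul_const _ _

lemma sum_columnMoment_diag [IsProbabilityMeasure ν] (z : Fin n) :
    ∑ i, ∑ k, columnMoment ν z i i k k = 1 := by
  have hpt (u : unitaryGroup (Fin n) ℂ) : ∑ i, ∑ k, columnMonomial z i i k k u = 1 := by
    have h : hermInner (uFrame u z) (uFrame u z) = 1 := by simpa using unitaryFrame_uFrame u z z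
    simp only [hermInner] at h
    simp only [columnMonomial, ← sum_mul_sum, mul_comm (uFrame u z _), h, one_mul]
  calc ∑ i, ∑ k, columnMoment ν z i i k k
      = ∫ u, ∑ i, ∑ k, columnMonomial z i i k k u ∂ν := by
        rw [integral_finsetSum _ fun i _ => integrable_finsetSum _ fun k _ =>
          integrable_columnMonomial ν z i i k k]
        exact sum_congr rfl fun i _ =>
          (integral_finsetSum _ fun k _ => integrable_columnMonomial ν z i i k k).symm
    _ = 1 := by simp [hpt]

variable [ν.IsMulLeftInvariant]

lemma columnMoment_eq_integral_mul_left (g : unitaryGroup (Fin n) ℂ) (z i j k l : Fin n) :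
    columnMoment ν z i j k l = ∫ u, columnMonomial z i j k l (g * u) ∂ν :=
  (integral_mul_left_eq_self _ g).symm

lemma columnMoment_eq_phase_mul {d : Fin n → ℂ} (hd : ∀ m, star (d m) * d m = 1)
    (z i j k l : Fin n) :
    columnMoment ν z i j k l =
      d i * conj (d j) * (d k * conj (d l)) * columnMoment ν z i j k l := by
  conv_lhs => rw [columnMoment_eq_integral_mul_left ν ⟨diagonal d, diagonal_mem_unitaryGroup hd⟩]
  rw [columnMoment, ← integral_const_mul]
  congr with u
  simp only [columnMonomial, uFrame_mul, mulVec_diagonal, map_mul]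
  ring

lemma columnMoment_eq_zero_of_not_paired {z i j k l : Fin n}
    (h : ¬((i = j ∧ k = l) ∨ (i = l ∧ j = k))) : columnMoment ν z i j k l = 0 := by
  set d : Fin n → Fin n → ℂ := fun p => Pi.mulSingle p Complex.I
  have hd (p m : Fin n) : star (d p m) * d p m = 1 := by
    by_cases hm : m = p <;> simp [d, hm]
  suffices ∃ p, d p i * conj (d p j) * (d p k * conj (d p l)) ≠ 1 by
    obtain ⟨p, hp⟩ := this
    exact (mul_left_eq_self₀.mp (columnMoment_eq_phase_mul ν (hd p) z i j k l).symm).resolve_left hp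
  by_cases hij : i = j
  · have hkl : k ≠ l := fun hkl => h (.inl ⟨hij, hkl⟩)
    refine ⟨k, ?_⟩
    subst hij
    by_cases hik : i = k <;> simp [d, hkl.symm, hik, Complex.ext_iff]
  by_cases hil : i = l
  · have hjk : j ≠ k := fun hjk => h (.inr ⟨hil, hjk⟩)
    refine ⟨k, ?_⟩
    subst hil
    by_cases hik : i = k <;> simp [d, hjk, hik, Complex.ext_iff]
  refine ⟨i, ?_⟩
  by_cases hki : k = i <;> norm_num [d, Ne.symm hij, Ne.symm hil, hki, Complex.ext_iff]

lemma columnMoment_perm (σ : Equiv.Perm (Fin n)) (z i j k l : Fin n) :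
    columnMoment ν z (σ i) (σ j) (σ k) (σ l) = columnMoment ν z i j k l := by
  rw [columnMoment_eq_integral_mul_left ν ⟨σ.permMatrix ℂ, permMatrix_mem_unitaryGroup σ⟩ z i j k l]
  simp [columnMoment, columnMonomial, uFrame_mul, permMatrix_mulVec]

lemma columnMoment_diag_eq (z i p : Fin n) :
    columnMoment ν z i i i i = columnMoment ν z p p p p := by
  simpa using (columnMoment_perm ν (Equiv.swap i p) z i i i i).symm

lemma columnMoment_offDiag_eq {z i k p q : Fin n} (hik : i ≠ k) (hpq : p ≠ q) :
    columnMoment ν z i i k k = columnMoment ν z p p q q := by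
  have swap_snd {a b b' : Fin n} (hb : b ≠ a) (hb' : b' ≠ a) :
      columnMoment ν z a a b b = columnMoment ν z a a b' b' := by
    simpa [Equiv.swap_apply_of_ne_of_ne hb.symm hb'.symm] using
      (columnMoment_perm ν (Equiv.swap b b') z a a b b).symm
  by_cases hip : i = p
  · subst hip
    exact swap_snd hik.symm hpq.symm
  calc columnMoment ν z i i k k = columnMoment ν z i i p p := swap_snd hik.symm (Ne.symm hip)
    _ = columnMoment ν z p p i i := columnMoment_pair_comm ν z i i p p
    _ = columnMoment ν z p p q q := swap_snd hip hpq.symm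

lemma columnMoment_hadamard [IsFiniteMeasure ν] {p q : Fin n} (hpq : p ≠ q) (z : Fin n) :
    columnMoment ν z p p p p = 2 * columnMoment ν z p p q q := by
  have hpt (u : unitaryGroup (Fin n) ℂ) :
      columnMonomial z p p p p (hadamardUnitary hpq * u) =
        ∑ i ∈ {p, q}, ∑ j ∈ {p, q}, ∑ k ∈ {p, q}, ∑ l ∈ {p, q},
          columnMonomial z i j k l u * (1 / 4) := by
    simp only [columnMonomial, uFrame_mul, hadamardUnitary_mulVec_apply, sum_pair hpq, map_mul,
      map_add, Complex.conj_ofReal]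
    set a := uFrame u z p
    set b := uFrame u z q
    linear_combination (((√2)⁻¹ : ℝ) * ((√2)⁻¹ : ℝ) + (1 / 2 : ℂ)) *
      ((a + b) * (conj a + conj b) * ((a + b) * (conj a + conj b))) * ofReal_inv_sqrt_two_mul_self
  have h := columnMoment_eq_integral_mul_left ν (hadamardUnitary hpq) z p p p p
  simp only [hpt] at h
  rw [(integrable_and_integral_sum_columnMonomial ν _ z _).2] at h
  simp only [sum_pair hpq, columnMoment_eq_zero_of_not_paired, hpq, hpq.symm, and_true, and_false,
    or_self, not_false_eq_true, zero_mul, zero_add, add_zero, one_div] at h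
  rw [columnMoment_diag_eq ν z q p, columnMoment_offDiag_eq ν hpq.symm hpq,
    columnMoment_comm ν z p q q p, columnMoment_comm ν z q p p q,
    columnMoment_offDiag_eq ν hpq.symm hpq] at h
  linear_combination 2 * h

variable [IsProbabilityMeasure ν]

lemma columnMoment_offDiag_eq_inv {p q : Fin n} (hpq : p ≠ q) (z : Fin n) :
    columnMoment ν z p p q q = 1 / (n * (n + 1)) := by
  have hrow (a : Fin n) :
      ∑ b, columnMoment ν z a a b b = (n + 1) * columnMoment ν z p p q q := by
    have (b : Fin n) : columnMoment ν z a a b b =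
        columnMoment ν z p p q q + if a = b then columnMoment ν z p p q q else 0 := by
      by_cases hab : a = b
      · rw [← hab, if_pos rfl, columnMoment_diag_eq ν z a p, columnMoment_hadamard ν hpq]
        ring
      · rw [columnMoment_offDiag_eq ν hab hpq, if_neg hab, add_zero]
    simp only [this, sum_add_distrib, sum_ite_eq, mem_univ, if_true, sum_const, card_univ,
      Fintype.card_fin, nsmul_eq_mul]
    ring
  have h := sum_columnMoment_diag ν z
  simp only [hrow, sum_const, card_univ, Fintype.card_fin, nsmul_eq_mul] at h
  rw [eq_div_iff (mul_ne_zero (Nat.cast_ne_zero.mpr p.pos.ne') n.cast_add_one_ne_zero)]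
  linear_combination h

lemma columnMoment_eq (hn : 1 < n) (z i j k l : Fin n) :
    columnMoment ν z i j k l =
      ((if i = j ∧ k = l then 1 else 0) + (if i = l ∧ j = k then 1 else 0)) / (n * (n + 1)) := by
  have hpq : (⟨0, by omega⟩ : Fin n) ≠ ⟨1, hn⟩ := by simp
  have hoff {a b : Fin n} (hab : a ≠ b) : columnMoment ν z a a b b = 1 / (n * (n + 1)) := by
    rw [columnMoment_offDiag_eq ν hab hpq, columnMoment_offDiag_eq_inv ν hpq]
  have hdiag (a : Fin n) : columnMoment ν z a a a a = 2 / (n * (n + 1)) := by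
    rw [columnMoment_diag_eq ν z a, columnMoment_hadamard ν hpq, columnMoment_offDiag_eq_inv ν hpq]
    ring
  by_cases hpair : (i = j ∧ k = l) ∨ (i = l ∧ j = k)
  · rcases hpair with ⟨rfl, rfl⟩ | ⟨rfl, rfl⟩
    · by_cases hik : i = k
      · subst hik; rw [hdiag]; norm_num
      · simp [hoff hik, hik]
    · by_cases hij : i = j
      · subst hij; rw [hdiag]; norm_num
      · rw [columnMoment_comm, hoff (Ne.symm hij)]; simp [hij]
  · rw [columnMoment_eq_zero_of_not_paired ν hpair, if_neg (fun h => hpair (.inl h)),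
      if_neg (fun h => hpair (.inr h))]
    simp

lemma sum_columnMoment_mul (hn : 1 < n) (z : Fin n) (T : Fin n → Fin n → Fin n → Fin n → ℂ) :
    ∑ i, ∑ j, ∑ k, ∑ l, columnMoment ν z i j k l * T i j k l =
      (∑ i, ∑ k, (T i i k k + T i k k i)) / (n * (n + 1)) := by
  simp [columnMoment_eq ν hn, ite_and, add_mul, div_mul_eq_mul_div, sum_add_distrib, ← sum_div]

end Moments

namespace AKCT

variable (𝓡 : AKCT n)

lemma R_uFrame_eq_sum (u : unitaryGroup (Fin n) ℂ) (z : Fin n) :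
    𝓡.R (uFrame u z) (uFrame u z) (uFrame u z) (uFrame u z) = ∑ i, ∑ j, ∑ k, ∑ l,
      columnMonomial z i j k l u * 𝓡.R (stdVec i) (stdVec j) (stdVec k) (stdVec l) :=
  𝓡.R_eq_sum _ _ _ _

lemma integrable_and_integral_R_uFrame [MeasurableSpace (unitaryGroup (Fin n) ℂ)]
    [BorelSpace (unitaryGroup (Fin n) ℂ)] (ν : Measure (unitaryGroup (Fin n) ℂ))
    [ν.IsMulLeftInvariant] [IsProbabilityMeasure ν] (hn : 1 < n) (z : Fin n) :
    Integrable (fun u => 𝓡.R (uFrame u z) (uFrame u z) (uFrame u z) (uFrame u z)) ν ∧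
    ∫ u, 𝓡.R (uFrame u z) (uFrame u z) (uFrame u z) (uFrame u z) ∂ν =
      ((2 / (n * (n + 1)) : ℝ) : ℂ) *
        ∑ i, ∑ k, 𝓡.R (stdVec i) (stdVec i) (stdVec k) (stdVec k) := by
  have hsymm (i k : Fin n) : 𝓡.R (stdVec i) (stdVec k) (stdVec k) (stdVec i) =
      𝓡.R (stdVec i) (stdVec i) (stdVec k) (stdVec k) := by
    rw [𝓡.kahler_symm, 𝓡.pair_symm]
  simp only [𝓡.R_uFrame_eq_sum]
  refine ⟨(integrable_and_integral_sum_columnMonomial ν _ z _).1, ?_⟩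
  rw [(integrable_and_integral_sum_columnMonomial ν _ z _).2, sum_columnMoment_mul ν hn]
  simp only [hsymm, ← two_mul, ← mul_sum]
  push_cast
  ring

end AKCT

end

/-- Berger-type averaging: the scalar curvature equals
`n(n+1)/2` times the Haar average of the holomorphic sectional curvature of the
first frame vector. -/
theorem stmt9 (n : ℕ) (hn : 2 ≤ n)
    [MeasurableSpace (Matrix.unitaryGroup (Fin n) ℂ)] [BorelSpace (Matrix.unitaryGroup (Fin n) ℂ)]
    (𝓡 : AKCT n)
    (ν : Measure (Matrix.unitaryGroup (Fin n) ℂ))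
    [ν.IsMulLeftInvariant] [IsProbabilityMeasure ν] :
    scalarCurv 𝓡 =
      ((n * (n + 1) : ℝ) / 2) *
        ∫ u, (𝓡.R (uFrame u ⟨0, by omega⟩) (uFrame u ⟨0, by omega⟩) (uFrame u ⟨0, by omega⟩) (uFrame u ⟨0, by omega⟩)).re ∂ν := by
  obtain ⟨hint, hval⟩ := 𝓡.integrable_and_integral_R_uFrame ν hn ⟨0, by omega⟩
  simp only [← RCLike.re_to_complex]
  rw [integral_re hint, hval, RCLike.re_to_complex, Complex.re_ofReal_mul]
  simp only [scalarCurv, Complex.re_sum]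
  field_simp

end
end

section
/- Let $\mathcal{R}$ be an algebraic Kähler curvature tensor on $\mathbb{C}^n$, $n \geq 2$, satisfying NQOBC: for every unitary frame $\{f_i\}$ and all real $\xi_i$, $\sum_{i,j}\mathcal{R}(f_i,\bar f_i,f_j,\bar f_j)(\xi_i-\xi_j)^2 \geq 0$. Then the scalar curvature $S = \sum_{i,j}\mathcal{R}(e_i,\bar e_i,e_j,\bar e_j)$ is nonnegative. -/
open Finset

noncomputable section
namespace Stmt11Aux

open Complex Finset

variable {n : ℕ}

lemma hermInner_add_left (v v' w : Fin n → ℂ) :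
    hermInner (v + v') w = hermInner v w + hermInner v' w := by
  simp [hermInner, add_mul, Finset.sum_add_distrib]

lemma hermInner_add_right (v w w' : Fin n → ℂ) :
    hermInner v (w + w') = hermInner v w + hermInner v w' := by
  simp [hermInner, mul_add, Finset.sum_add_distrib]

lemma hermInner_smul_left (a : ℂ) (v w : Fin n → ℂ) :
    hermInner (a • v) w = (starRingEnd ℂ) a * hermInner v w := by
  simp [hermInner, map_mul, mul_assoc, Finset.mul_sum]

lemma hermInner_smul_right (a : ℂ) (v w : Fin n → ℂ) :
    hermInner v (a • w) = a * hermInner v w := by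
  simp only [hermInner, Pi.smul_apply, smul_eq_mul, Finset.mul_sum]
  exact Finset.sum_congr rfl fun k _ => by ring

lemma hermInner_neg_left (v w : Fin n → ℂ) :
    hermInner (-v) w = -hermInner v w := by
  simp [hermInner]

lemma hermInner_neg_right (v w : Fin n → ℂ) :
    hermInner v (-w) = -hermInner v w := by
  simp [hermInner]

lemma hermInner_std (i j : Fin n) :
    hermInner (stdVec i) (stdVec j) = if i = j then 1 else 0 := by
  simp [hermInner, stdVec, ite_and, eq_comm]

lemma std_unitary : UnitaryFrame (stdVec : Fin n → Fin n → ℂ) :=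
  fun i j => hermInner_std i j

end Stmt11Aux
end
noncomputable section
namespace Stmt11Aux2

open Complex Finset Stmt11Aux

variable {n : ℕ} (𝓡 : AKCT n)

lemma R12 (a b c d : ℂ) (X Y Z W : Fin n → ℂ) :
    𝓡.R (a • X + b • Y) (c • X + d • Y) Z W
      = a * (starRingEnd ℂ) c * 𝓡.R X X Z W + a * (starRingEnd ℂ) d * 𝓡.R X Y Z W
        + b * (starRingEnd ℂ) c * 𝓡.R Y X Z W + b * (starRingEnd ℂ) d * 𝓡.R Y Y Z W := by
  simp only [𝓡.add_fst, 𝓡.smul_fst, 𝓡.add_snd, 𝓡.smul_snd]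
  ring

lemma R34 (a b c d : ℂ) (X Y Z W : Fin n → ℂ) :
    𝓡.R Z W (a • X + b • Y) (c • X + d • Y)
      = a * (starRingEnd ℂ) c * 𝓡.R Z W X X + a * (starRingEnd ℂ) d * 𝓡.R Z W X Y
        + b * (starRingEnd ℂ) c * 𝓡.R Z W Y X + b * (starRingEnd ℂ) d * 𝓡.R Z W Y Y := by
  rw [𝓡.pair_symm, R12, 𝓡.pair_symm Z W X X]
  rw [𝓡.pair_symm X Y Z W, 𝓡.pair_symm Y X Z W, 𝓡.pair_symm Y Y Z W]

lemma sum_split {M : Type*} [AddCommMonoid M] {p q : Fin n} (hpq : p ≠ q) (f : Fin n → M) :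
    ∑ i, f i = f p + f q + ∑ i ∈ (univ.erase p).erase q, f i := by
  rw [← Finset.add_sum_erase _ f (mem_univ p),
    ← Finset.add_sum_erase _ f (Finset.mem_erase.mpr ⟨hpq.symm, mem_univ q⟩), add_assoc]

/-- rotated frame in the `(p,q)`-plane -/
def fr (p q : Fin n) (a b : ℂ) : Fin n → Fin n → ℂ := fun i =>
  if i = p then a • stdVec p + b • stdVec q
  else if i = q then ((starRingEnd ℂ) b) • stdVec p + (-((starRingEnd ℂ) a)) • stdVec q
  else stdVec i

variable {p q : Fin n} {a b : ℂ}

lemma fr_p : fr p q a b p = a • stdVec p + b • stdVec q := if_pos rfl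

lemma fr_q (hpq : p ≠ q) : fr p q a b q
    = ((starRingEnd ℂ) b) • stdVec p + (-((starRingEnd ℂ) a)) • stdVec q := by
  simp [fr, hpq.symm]

lemma fr_other {i : Fin n} (hip : i ≠ p) (hiq : i ≠ q) : fr p q a b i = stdVec i := by
  simp [fr, hip, hiq]

lemma fr_unitary (hpq : p ≠ q)
    (hab : (starRingEnd ℂ) a * a + (starRingEnd ℂ) b * b = 1) :
    UnitaryFrame (fr p q a b) := by
  intro i j
  by_cases hip : i = p
  · by_cases hjp : j = p
    · rw [hip, hjp, fr_p]
      simp [hermInner_add_left, hermInner_add_right, hermInner_smul_left,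
        hermInner_smul_right, hermInner_neg_left, hermInner_neg_right, hermInner_std,
        hpq, hpq.symm]
      linear_combination hab
    · by_cases hjq : j = q
      · rw [hip, hjq, fr_p, fr_q hpq]
        simp [hermInner_add_left, hermInner_add_right, hermInner_smul_left,
          hermInner_smul_right, hermInner_neg_left, hermInner_neg_right, hermInner_std,
          hpq, hpq.symm, neg_smul]
        ring
      · rw [hip, fr_p, fr_other hjp hjq]
        have h1 : p ≠ j := fun hh => hjp hh.symm
        have h2 : q ≠ j := fun hh => hjq hh.symm
        simp [hermInner_add_left, hermInner_smul_left, hermInner_std, h1, h2]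
  · by_cases hiq : i = q
    · by_cases hjp : j = p
      · rw [hiq, hjp, fr_p, fr_q hpq]
        simp [hermInner_add_left, hermInner_add_right, hermInner_smul_left,
          hermInner_smul_right, hermInner_neg_left, hermInner_neg_right, hermInner_std,
          hpq, hpq.symm, neg_smul]
        ring
      · by_cases hjq : j = q
        · rw [hiq, hjq, fr_q hpq]
          simp [hermInner_add_left, hermInner_add_right, hermInner_smul_left,
            hermInner_smul_right, hermInner_neg_left, hermInner_neg_right, hermInner_std,
            hpq, hpq.symm, neg_smul]
          linear_combination hab
        · rw [hiq, fr_q hpq, fr_other hjp hjq]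
          have h1 : p ≠ j := fun hh => hjp hh.symm
          have h2 : q ≠ j := fun hh => hjq hh.symm
          simp [hermInner_add_left, hermInner_smul_left, hermInner_neg_left,
            hermInner_std, neg_smul, h1, h2]
    · by_cases hjp : j = p
      · rw [hjp, fr_p, fr_other hip hiq]
        simp [hermInner_add_right, hermInner_smul_right, hermInner_std, hip, hiq]
      · by_cases hjq : j = q
        · rw [hjq, fr_q hpq, fr_other hip hiq]
          simp [hermInner_add_right, hermInner_smul_right, hermInner_neg_right,
            hermInner_std, neg_smul, hip, hiq]
        · rw [fr_other hip hiq, fr_other hjp hjq, hermInner_std]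

end Stmt11Aux2
end
noncomputable section
namespace Stmt11Aux3

open Complex Finset Stmt11Aux Stmt11Aux2

variable {n : ℕ}

/-- the weight function `ξ = δ_p - δ_q` -/
def xi (p q i : Fin n) : ℝ := if i = p then 1 else if i = q then -1 else 0

lemma Qsplit {p q : Fin n} (hpq : p ≠ q) (C : Fin n → Fin n → ℝ)
    (hC : ∀ i j, C i j = C j i) :
    ∑ i, ∑ j, C i j * (xi p q i - xi p q j) ^ 2
      = 8 * C p q + ∑ j ∈ (univ.erase p).erase q, (2 * C p j + 2 * C q j) := by
  have hxp : xi p q p = 1 := if_pos rfl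
  have hxq : xi p q q = -1 := by simp [xi, Ne.symm hpq]
  have hx0 : ∀ j : Fin n, j ≠ p → j ≠ q → xi p q j = 0 := by
    intro j h1 h2; simp [xi, h1, h2]
  have hmem : ∀ j ∈ (univ.erase p).erase q, j ≠ p ∧ j ≠ q := by
    intro j hj
    rcases Finset.mem_erase.mp hj with ⟨h2, hj'⟩
    exact ⟨(Finset.mem_erase.mp hj').1, h2⟩
  rw [sum_split hpq]
  rw [sum_split hpq (fun j => C p j * (xi p q p - xi p q j) ^ 2)]
  rw [sum_split hpq (fun j => C q j * (xi p q q - xi p q j) ^ 2)]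
  have e1 : ∑ j ∈ (univ.erase p).erase q, C p j * (xi p q p - xi p q j) ^ 2
      = ∑ j ∈ (univ.erase p).erase q, C p j := by
    refine Finset.sum_congr rfl fun j hj => ?_
    rcases hmem j hj with ⟨h1, h2⟩
    rw [hxp, hx0 j h1 h2]; ring
  have e2 : ∑ j ∈ (univ.erase p).erase q, C q j * (xi p q q - xi p q j) ^ 2
      = ∑ j ∈ (univ.erase p).erase q, C q j := by
    refine Finset.sum_congr rfl fun j hj => ?_
    rcases hmem j hj with ⟨h1, h2⟩
    rw [hxq, hx0 j h1 h2]; ring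
  have e3 : ∑ i ∈ (univ.erase p).erase q, ∑ j, C i j * (xi p q i - xi p q j) ^ 2
      = ∑ i ∈ (univ.erase p).erase q, (C p i + C q i) := by
    refine Finset.sum_congr rfl fun i hi => ?_
    rcases hmem i hi with ⟨h1, h2⟩
    rw [sum_split hpq (fun j => C i j * (xi p q i - xi p q j) ^ 2)]
    have e4 : ∑ j ∈ (univ.erase p).erase q, C i j * (xi p q i - xi p q j) ^ 2 = 0 := by
      refine Finset.sum_eq_zero fun j hj => ?_
      rcases hmem j hj with ⟨h3, h4⟩
      rw [hx0 i h1 h2, hx0 j h3 h4]; ring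
    rw [e4, hxp, hxq, hx0 i h1 h2, hC i p, hC i q]
    ring
  rw [e1, e2, e3, hxp, hxq, hC q p]
  have comb : ∑ j ∈ (univ.erase p).erase q, (2 * C p j + 2 * C q j)
      = ∑ j ∈ (univ.erase p).erase q, C p j + ∑ j ∈ (univ.erase p).erase q, C q j
        + ∑ j ∈ (univ.erase p).erase q, (C p j + C q j) := by
    rw [← Finset.sum_add_distrib, ← Finset.sum_add_distrib]
    exact Finset.sum_congr rfl fun j _ => by ring
  rw [comb]
  ring

end Stmt11Aux3
end
noncomputable section
namespace Stmt11Aux4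

open Complex Finset Stmt11Aux Stmt11Aux2 Stmt11Aux3

variable {n : ℕ} (𝓡 : AKCT n)

lemma perj (p q : Fin n) (a b : ℂ)
    (hab : (starRingEnd ℂ) a * a + (starRingEnd ℂ) b * b = 1) (Z W : Fin n → ℂ) :
    𝓡.R (a • stdVec p + b • stdVec q) (a • stdVec p + b • stdVec q) Z W
      + 𝓡.R ((starRingEnd ℂ) b • stdVec p + (-((starRingEnd ℂ) a)) • stdVec q)
          ((starRingEnd ℂ) b • stdVec p + (-((starRingEnd ℂ) a)) • stdVec q) Z W
      = 𝓡.R (stdVec p) (stdVec p) Z W + 𝓡.R (stdVec q) (stdVec q) Z W := by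
  rw [R12, R12]
  simp only [map_neg, Complex.conj_conj]
  linear_combination (𝓡.R (stdVec p) (stdVec p) Z W + 𝓡.R (stdVec q) (stdVec q) Z W) * hab

lemma Pident (p q : Fin n) (t : ℝ) (ht : (t:ℂ) * (t:ℂ) = 1/2) :
    𝓡.R ((t:ℂ) • stdVec p + (t:ℂ) • stdVec q) ((t:ℂ) • stdVec p + (t:ℂ) • stdVec q)
        ((starRingEnd ℂ) (t:ℂ) • stdVec p + (-((starRingEnd ℂ) (t:ℂ))) • stdVec q)
        ((starRingEnd ℂ) (t:ℂ) • stdVec p + (-((starRingEnd ℂ) (t:ℂ))) • stdVec q)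
      + 𝓡.R ((t:ℂ) • stdVec p + ((t:ℂ) * I) • stdVec q)
          ((t:ℂ) • stdVec p + ((t:ℂ) * I) • stdVec q)
          ((starRingEnd ℂ) ((t:ℂ) * I) • stdVec p + (-((starRingEnd ℂ) (t:ℂ))) • stdVec q)
          ((starRingEnd ℂ) ((t:ℂ) * I) • stdVec p + (-((starRingEnd ℂ) (t:ℂ))) • stdVec q)
      = (1/2) * (𝓡.R (stdVec p) (stdVec p) (stdVec p) (stdVec p)
          + 𝓡.R (stdVec q) (stdVec q) (stdVec q) (stdVec q)) := by
  have k1 : 𝓡.R (stdVec p) (stdVec q) (stdVec q) (stdVec p)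
      = 𝓡.R (stdVec q) (stdVec q) (stdVec p) (stdVec p) := 𝓡.kahler_symm _ _ _ _
  have k2 : 𝓡.R (stdVec q) (stdVec p) (stdVec p) (stdVec q)
      = 𝓡.R (stdVec p) (stdVec p) (stdVec q) (stdVec q) := 𝓡.kahler_symm _ _ _ _
  have k3 : 𝓡.R (stdVec p) (stdVec q) (stdVec p) (stdVec p)
      = 𝓡.R (stdVec p) (stdVec p) (stdVec p) (stdVec q) := 𝓡.pair_symm _ _ _ _
  have k4 : 𝓡.R (stdVec p) (stdVec q) (stdVec q) (stdVec q)
      = 𝓡.R (stdVec q) (stdVec q) (stdVec p) (stdVec q) := 𝓡.kahler_symm _ _ _ _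
  have k5 : 𝓡.R (stdVec q) (stdVec p) (stdVec p) (stdVec p)
      = 𝓡.R (stdVec p) (stdVec p) (stdVec q) (stdVec p) := 𝓡.kahler_symm _ _ _ _
  have k6 : 𝓡.R (stdVec q) (stdVec p) (stdVec q) (stdVec q)
      = 𝓡.R (stdVec q) (stdVec q) (stdVec q) (stdVec p) := 𝓡.pair_symm _ _ _ _
  rw [R12, R12]
  simp only [R34, map_neg, Complex.conj_conj, map_mul, Complex.conj_ofReal, Complex.conj_I]
  rw [k1, k2, k3, k4, k5, k6]
  have ht4 : (t:ℂ) ^ 4 = 1/4 := by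
    have : (t:ℂ) ^ 4 = ((t:ℂ) * (t:ℂ)) * ((t:ℂ) * (t:ℂ)) := by ring
    rw [this, ht]; norm_num
  have hI2 : Complex.I ^ 2 = -1 := Complex.I_sq
  have hI3 : Complex.I ^ 3 = -Complex.I := by
    rw [pow_succ, hI2]; ring
  have hI4 : Complex.I ^ 4 = 1 := by
    rw [show (4:ℕ) = 2*2 from rfl, pow_mul, hI2]; ring
  ring_nf
  rw [hI2, hI3, hI4, ht4]
  ring

end Stmt11Aux4
end
noncomputable section
namespace Stmt11Aux5

open Complex Finset Stmt11Aux Stmt11Aux2 Stmt11Aux3 Stmt11Aux4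

variable {n : ℕ}

lemma key (𝓡 : AKCT n) (h : NQOBC 𝓡) (p q : Fin n) (hpq : p ≠ q) :
    0 ≤ (𝓡.R (stdVec p) (stdVec p) (stdVec p) (stdVec p)).re
      + (𝓡.R (stdVec q) (stdVec q) (stdVec q) (stdVec q)).re
      + ∑ j ∈ (univ.erase p).erase q,
          ((𝓡.R (stdVec p) (stdVec p) (stdVec j) (stdVec j)).re
            + (𝓡.R (stdVec q) (stdVec q) (stdVec j) (stdVec j)).re) := by
  set t : ℝ := (Real.sqrt 2)⁻¹ with htdef
  have ht : (t:ℂ) * (t:ℂ) = 1/2 := by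
    have h2 : Real.sqrt 2 * Real.sqrt 2 = 2 := Real.mul_self_sqrt (by norm_num)
    have : t * t = 1/2 := by
      rw [htdef, ← mul_inv, h2]; norm_num
    rw [← Complex.ofReal_mul, this]; norm_num
  have hI : Complex.I * Complex.I = -1 := Complex.I_mul_I
  have hab1 : (starRingEnd ℂ) (t:ℂ) * (t:ℂ) + (starRingEnd ℂ) (t:ℂ) * (t:ℂ) = 1 := by
    rw [Complex.conj_ofReal]; linear_combination 2 * ht
  have hab2 : (starRingEnd ℂ) (t:ℂ) * (t:ℂ)
      + (starRingEnd ℂ) ((t:ℂ) * Complex.I) * ((t:ℂ) * Complex.I) = 1 := by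
    simp only [map_mul, Complex.conj_ofReal, Complex.conj_I]
    linear_combination 2 * ht - ((t:ℂ) * (t:ℂ)) * hI
  set g1 := fr p q (t:ℂ) (t:ℂ) with hg1
  set g2 := fr p q (t:ℂ) ((t:ℂ) * Complex.I) with hg2
  have hQ1 := h g1 (fr_unitary hpq hab1) (xi p q)
  have hQ2 := h g2 (fr_unitary hpq hab2) (xi p q)
  have hsym1 : ∀ i j, (𝓡.R (g1 i) (g1 i) (g1 j) (g1 j)).re
      = (𝓡.R (g1 j) (g1 j) (g1 i) (g1 i)).re := fun i j => by rw [𝓡.pair_symm]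
  have hsym2 : ∀ i j, (𝓡.R (g2 i) (g2 i) (g2 j) (g2 j)).re
      = (𝓡.R (g2 j) (g2 j) (g2 i) (g2 i)).re := fun i j => by rw [𝓡.pair_symm]
  rw [Qsplit hpq _ hsym1] at hQ1
  rw [Qsplit hpq _ hsym2] at hQ2
  -- abbreviations
  set T : ℝ := ∑ j ∈ (univ.erase p).erase q,
      ((𝓡.R (stdVec p) (stdVec p) (stdVec j) (stdVec j)).re
        + (𝓡.R (stdVec q) (stdVec q) (stdVec j) (stdVec j)).re) with hT
  have hmem : ∀ j ∈ (univ.erase p).erase q, j ≠ p ∧ j ≠ q := by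
    intro j hj
    rcases Finset.mem_erase.mp hj with ⟨h2, hj'⟩
    exact ⟨(Finset.mem_erase.mp hj').1, h2⟩
  -- sums reduce to 2*T
  have hsum1 : ∑ j ∈ (univ.erase p).erase q,
      (2 * (𝓡.R (g1 p) (g1 p) (g1 j) (g1 j)).re
        + 2 * (𝓡.R (g1 q) (g1 q) (g1 j) (g1 j)).re) = 2 * T := by
    rw [hT, Finset.mul_sum]
    refine Finset.sum_congr rfl fun j hj => ?_
    rcases hmem j hj with ⟨hj1, hj2⟩
    have hc := congrArg Complex.re
      (perj 𝓡 p q (t:ℂ) (t:ℂ) hab1 (stdVec j) (stdVec j))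
    simp only [Complex.add_re] at hc
    rw [hg1, fr_p, fr_q hpq, fr_other hj1 hj2]
    linarith [hc]
  have hsum2 : ∑ j ∈ (univ.erase p).erase q,
      (2 * (𝓡.R (g2 p) (g2 p) (g2 j) (g2 j)).re
        + 2 * (𝓡.R (g2 q) (g2 q) (g2 j) (g2 j)).re) = 2 * T := by
    rw [hT, Finset.mul_sum]
    refine Finset.sum_congr rfl fun j hj => ?_
    rcases hmem j hj with ⟨hj1, hj2⟩
    have hc := congrArg Complex.re
      (perj 𝓡 p q (t:ℂ) ((t:ℂ) * Complex.I) hab2 (stdVec j) (stdVec j))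
    simp only [Complex.add_re] at hc
    rw [hg2, fr_p, fr_q hpq, fr_other hj1 hj2]
    linarith [hc]
  rw [hsum1] at hQ1
  rw [hsum2] at hQ2
  -- the holomorphic part
  have hP := congrArg Complex.re (Pident 𝓡 p q t ht)
  simp only [Complex.add_re] at hP
  have hPre : ((1/2 : ℂ) * (𝓡.R (stdVec p) (stdVec p) (stdVec p) (stdVec p)
      + 𝓡.R (stdVec q) (stdVec q) (stdVec q) (stdVec q))).re
      = (1/2) * ((𝓡.R (stdVec p) (stdVec p) (stdVec p) (stdVec p)).re
        + (𝓡.R (stdVec q) (stdVec q) (stdVec q) (stdVec q)).re) := by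
    rw [Complex.mul_re]
    simp [Complex.add_re, Complex.add_im]
    try ring
  rw [hPre] at hP
  have hX : (𝓡.R (g1 p) (g1 p) (g1 q) (g1 q)).re
      + (𝓡.R (g2 p) (g2 p) (g2 q) (g2 q)).re
      = (1/2) * ((𝓡.R (stdVec p) (stdVec p) (stdVec p) (stdVec p)).re
        + (𝓡.R (stdVec q) (stdVec q) (stdVec q) (stdVec q)).re) := by
    rw [hg1, hg2, fr_p, fr_q hpq, fr_p, fr_q hpq]
    exact hP
  linarith [hQ1, hQ2, hX]

end Stmt11Aux5
end
noncomputable section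
namespace Stmt11Aux6

open Complex Finset Stmt11Aux Stmt11Aux2 Stmt11Aux3 Stmt11Aux4 Stmt11Aux5

variable {n : ℕ}

lemma sum_split1 {M : Type*} [AddCommMonoid M] (k : Fin n) (f : Fin n → M) :
    ∑ i, f i = f k + ∑ i ∈ univ.erase k, f i :=
  (Finset.add_sum_erase _ f (mem_univ k)).symm

/-- indicator weight -/
def xi1 (k i : Fin n) : ℝ := if i = k then 1 else 0

lemma Qsplit1 (k : Fin n) (C : Fin n → Fin n → ℝ)
    (hC : ∀ i j, C i j = C j i) :
    ∑ i, ∑ j, C i j * (xi1 k i - xi1 k j) ^ 2 = 2 * ∑ j ∈ univ.erase k, C k j := by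
  have hxk : xi1 k k = 1 := if_pos rfl
  have hx0 : ∀ j : Fin n, j ≠ k → xi1 k j = 0 := fun j hj => if_neg hj
  rw [sum_split1 k]
  rw [sum_split1 k (fun j => C k j * (xi1 k k - xi1 k j) ^ 2)]
  have e1 : ∑ j ∈ univ.erase k, C k j * (xi1 k k - xi1 k j) ^ 2
      = ∑ j ∈ univ.erase k, C k j := by
    refine Finset.sum_congr rfl fun j hj => ?_
    rw [hxk, hx0 j (Finset.mem_erase.mp hj).1]; ring
  have e2 : ∑ i ∈ univ.erase k, ∑ j, C i j * (xi1 k i - xi1 k j) ^ 2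
      = ∑ i ∈ univ.erase k, C k i := by
    refine Finset.sum_congr rfl fun i hi => ?_
    have hik := (Finset.mem_erase.mp hi).1
    rw [sum_split1 k (fun j => C i j * (xi1 k i - xi1 k j) ^ 2)]
    have e3 : ∑ j ∈ univ.erase k, C i j * (xi1 k i - xi1 k j) ^ 2 = 0 := by
      refine Finset.sum_eq_zero fun j hj => ?_
      rw [hx0 i hik, hx0 j (Finset.mem_erase.mp hj).1]; ring
    rw [e3, hxk, hx0 i hik, hC i k]
    ring
  rw [e1, e2, hxk]
  ring

lemma row (𝓡 : AKCT n) (h : NQOBC 𝓡) (k : Fin n) :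
    0 ≤ ∑ j ∈ univ.erase k, (𝓡.R (stdVec k) (stdVec k) (stdVec j) (stdVec j)).re := by
  have hQ := h stdVec std_unitary (xi1 k)
  have hsym : ∀ i j : Fin n, (𝓡.R (stdVec i) (stdVec i) (stdVec j) (stdVec j)).re
      = (𝓡.R (stdVec j) (stdVec j) (stdVec i) (stdVec i)).re := fun i j => by
    rw [𝓡.pair_symm]
  rw [Qsplit1 k _ hsym] at hQ
  linarith

end Stmt11Aux6
end
noncomputable section

open Complex Finset Stmt11Aux Stmt11Aux2 Stmt11Aux3 Stmt11Aux4 Stmt11Aux5 Stmt11Aux6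

/-- first assertion of Theorem 3.1: NQOBC implies nonnegative
scalar curvature. -/
theorem stmt11 (n : ℕ) (hn : 2 ≤ n) (𝓡 : AKCT n) (h : NQOBC 𝓡) :
    0 ≤ scalarCurv 𝓡 := by
  set B : Fin n → Fin n → ℝ :=
    fun i j => (𝓡.R (stdVec i) (stdVec i) (stdVec j) (stdVec j)).re with hB
  have hBsym : ∀ i j, B i j = B j i := fun i j => by
    simp only [hB]; rw [𝓡.pair_symm]
  set Roff : Fin n → ℝ := fun i => ∑ j ∈ univ.erase i, B i j with hRoff
  set D : ℝ := ∑ i, B i i with hD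
  set Off : ℝ := ∑ i, Roff i with hOff
  set m : ℝ := (n : ℝ) with hm
  have hm2 : (2:ℝ) ≤ m := by rw [hm]; exact_mod_cast hn
  have hcast : ((n - 1 : ℕ) : ℝ) = m - 1 := by
    rw [Nat.cast_sub (by omega), Nat.cast_one, hm]
  -- scalar curvature decomposition
  have hS : scalarCurv 𝓡 = D + Off := by
    rw [scalarCurv, hD, hOff, ← Finset.sum_add_distrib]
    exact Finset.sum_congr rfl fun i _ => sum_split1 i (fun j => B i j)
  -- rows are nonnegative
  have hrow : ∀ k, 0 ≤ Roff k := fun k => row 𝓡 h k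
  have hOffpos : 0 ≤ Off := Finset.sum_nonneg fun k _ => hrow k
  -- key inequality, rewritten
  have hkey : ∀ p q : Fin n, p ≠ q →
      0 ≤ B p p + B q q + Roff p + Roff q - 2 * B p q := by
    intro p q hpq
    have hk := key 𝓡 h p q hpq
    have hq : q ∈ univ.erase p := Finset.mem_erase.mpr ⟨hpq.symm, mem_univ q⟩
    have hp : p ∈ univ.erase q := Finset.mem_erase.mpr ⟨hpq, mem_univ p⟩
    have hsum : ∑ j ∈ (univ.erase p).erase q, (B p j + B q j)
        = (Roff p - B p q) + (Roff q - B q p) := by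
      rw [Finset.sum_add_distrib,
        Finset.sum_erase_eq_sub (f := fun j => B p j) hq,
        Finset.erase_right_comm,
        Finset.sum_erase_eq_sub (f := fun j => B q j) hp]
    have hk' : 0 ≤ B p p + B q q + ∑ j ∈ (univ.erase p).erase q, (B p j + B q j) := hk
    rw [hsum, hBsym q p] at hk'
    linarith
  -- sum the key inequality over all ordered pairs
  have hinner : ∀ p : Fin n,
      ∑ q ∈ univ.erase p, (B p p + B q q + Roff p + Roff q - 2 * B p q)
        = (m - 1) * B p p + (D - B p p) + (m - 1) * Roff p + (Off - Roff p)
          - 2 * Roff p := by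
    intro p
    rw [Finset.sum_sub_distrib, Finset.sum_add_distrib, Finset.sum_add_distrib,
      Finset.sum_add_distrib, Finset.sum_const, Finset.sum_const,
      Finset.card_erase_of_mem (mem_univ p), card_univ, Fintype.card_fin,
      Finset.sum_erase_eq_sub (f := fun q => B q q) (mem_univ p),
      Finset.sum_erase_eq_sub (f := fun q => Roff q) (mem_univ p),
      ← Finset.mul_sum]
    simp only [nsmul_eq_mul, hcast]
    try rw [← hD, ← hOff, ← hRoff]
    try ring
  have hbig : 0 ≤ 2 * (m - 1) * D + (2 * m - 4) * Off := by
    have h1 : 0 ≤ ∑ p, ∑ q ∈ univ.erase p, (B p p + B q q + Roff p + Roff q - 2 * B p q) :=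
      Finset.sum_nonneg fun p _ => Finset.sum_nonneg fun q hq =>
        hkey p q (Ne.symm (Finset.mem_erase.mp hq).1)
    have h2 : ∑ p, ((m - 1) * B p p + (D - B p p) + (m - 1) * Roff p + (Off - Roff p)
        - 2 * Roff p)
        = 2 * (m - 1) * D + (2 * m - 4) * Off := by
      rw [Finset.sum_sub_distrib, Finset.sum_add_distrib, Finset.sum_add_distrib,
        Finset.sum_add_distrib, Finset.sum_sub_distrib, Finset.sum_sub_distrib,
        Finset.sum_const, Finset.sum_const, card_univ, Fintype.card_fin,
        ← Finset.mul_sum, ← Finset.mul_sum, ← Finset.mul_sum, ← hD, ← hOff]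
      simp only [nsmul_eq_mul, ← hm]
      ring
    rw [show (∑ p, ∑ q ∈ univ.erase p, (B p p + B q q + Roff p + Roff q - 2 * B p q))
        = ∑ p, ((m - 1) * B p p + (D - B p p) + (m - 1) * Roff p + (Off - Roff p)
          - 2 * Roff p) from Finset.sum_congr rfl fun p _ => hinner p, h2] at h1
    exact h1
  -- conclude
  rw [hS]
  have hid : 2 * (m - 1) * (D + Off) = (2 * (m - 1) * D + (2 * m - 4) * Off) + 2 * Off := by
    ring
  have hpos : 0 < 2 * (m - 1) := by linarith
  nlinarith [hbig, hOffpos, hpos, hid]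

end
end
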